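/- arXiv:1806.10660 — 4 statements merged into one kernel-verified Lean document; each statement's English description precedes it below -/
import Mathlib

section
/- For the specific instance described in the context, V(g) < OPT(f): the sum over the three blocks of the minimum expected block-verification cost is strictly smaller than the minimum expected evaluation cost of f. In particular, there exists a symmetric Boolean function and a cost vector for which optimal expected verification cost is strictly less than optimal expected evaluation cost. -/
open Finset

/-- Number of true bits of an assignment. -/
def N1 {n : ℕ} (a : Fin n → Bool) : ℕ :=
  (Finset.univ.filter (fun i => a i = true)).card

/-- Probability of an assignment. -/
noncomputable def pr {n : ℕ} (p : Fin n → ℝ) (a : Fin n → Bool) : ℝ :=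
  ∏ i, if a i then p i else 1 - p i
/-- Binary decision trees over `n` bits, with natural-number leaf labels. -/
inductive DTree (n : ℕ) : Type where
  | leaf : ℕ → DTree n
  | node : Fin n → DTree n → DTree n → DTree n

namespace DTree

/-- Output of the tree on assignment `a`. -/
def eval {n : ℕ} : DTree n → (Fin n → Bool) → ℕ
  | .leaf v, _ => v
  | .node i t0 t1, a => if a i then eval t1 a else eval t0 a

/-- Total cost of the queries made on assignment `a`. -/
noncomputable def cost {n : ℕ} (c : Fin n → ℝ) : DTree n → (Fin n → Bool) → ℝ
  | .leaf _, _ => 0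
  | .node i t0 t1, a => c i + (if a i then cost c t1 a else cost c t0 a)

/-- The list of indices queried on assignment `a`, in order. -/
def path {n : ℕ} : DTree n → (Fin n → Bool) → List (Fin n)
  | .leaf _, _ => []
  | .node i t0 t1, a => i :: (if a i then path t1 a else path t0 a)

/-- No index occurs twice on any root-to-leaf path (given already-used indices). -/
def Proper {n : ℕ} : DTree n → Finset (Fin n) → Prop
  | .leaf _, _ => True
  | .node i t0 t1, used =>
      i ∉ used ∧ Proper t0 (insert i used) ∧ Proper t1 (insert i used)

/-- Every root-to-leaf path queries all `n` indices (and no repeats). -/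
def Full {n : ℕ} : DTree n → Finset (Fin n) → Prop
  | .leaf _, used => used = Finset.univ
  | .node i t0 t1, used =>
      i ∉ used ∧ Full t0 (insert i used) ∧ Full t1 (insert i used)

end DTree
/-- Expected-cost-minimizing value over all decision trees evaluating `h`. -/
noncomputable def OPTcost {n : ℕ} (p c : Fin n → ℝ) (h : (Fin n → Bool) → ℕ) : ℝ :=
  sInf {x : ℝ | ∃ T : DTree n, T.Proper ∅ ∧ (∀ a, T.eval a = h a) ∧
    x = ∑ a : Fin n → Bool, T.cost c a * pr p a}

/-- The probabilities of the counterexample instance. -/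
noncomputable def p4 : Fin 4 → ℝ := ![0.1, 0.3, 0.9, 0.8]

/-- The costs of the counterexample instance. -/
noncomputable def c4 : Fin 4 → ℝ := ![5000, 6000, 3000, 5000]

/-- Minimum, over decision trees evaluating the block indicator `fj`, of the expected
cost restricted to assignments of the block `Mpred`. -/
noncomputable def blockVerCost (Mpred : (Fin 4 → Bool) → Prop) [DecidablePred Mpred]
    (fj : (Fin 4 → Bool) → ℕ) : ℝ :=
  sInf {x : ℝ | ∃ T : DTree 4, T.Proper ∅ ∧ (∀ a, T.eval a = fj a) ∧
    x = ∑ a ∈ Finset.univ.filter Mpred, T.cost c4 a * pr p4 a}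

namespace Aux15

def cn : Fin 4 → ℕ := ![5000, 6000, 3000, 5000]
def pnum : Fin 4 → ℕ := ![1, 3, 9, 8]
def prN (a : Fin 4 → Bool) : ℕ := ∏ i, (if a i then pnum i else 10 - pnum i)
def fN (a : Fin 4 → Bool) : ℕ := if N1 a = 1 ∨ N1 a = 2 then 1 else 0

def costN : DTree 4 → (Fin 4 → Bool) → ℕ
  | .leaf _, _ => 0
  | .node i t0 t1, a => cn i + (if a i then costN t1 a else costN t0 a)

lemma c4_eq (i : Fin 4) : c4 i = (cn i : ℝ) := by
  fin_cases i <;> norm_num [c4, cn]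

lemma pr_eq (a : Fin 4 → Bool) : pr p4 a = (prN a : ℝ) / 10 ^ 4 := by
  have h : ∀ i : Fin 4, (if a i then p4 i else 1 - p4 i) =
      ((if a i then pnum i else 10 - pnum i : ℕ) : ℝ) / 10 := by
    intro i; fin_cases i <;> cases h : a _ <;> simp [h, p4, pnum] <;> norm_num
  unfold pr prN
  rw [Finset.prod_congr rfl fun i _ => h i, Finset.prod_div_distrib, Finset.prod_const]
  push_cast
  norm_num

lemma cost_eq (T : DTree 4) (a : Fin 4 → Bool) : T.cost c4 a = (costN T a : ℝ) := by
  induction T with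
  | leaf v => simp [DTree.cost, costN]
  | node i t0 t1 ih0 ih1 =>
      cases h : a i <;> simp [DTree.cost, costN, h, ih0, ih1, c4_eq] <;> push_cast <;> ring

lemma term_eq (T : DTree 4) (a : Fin 4 → Bool) :
    T.cost c4 a * pr p4 a = ((costN T a * prN a : ℕ) : ℝ) / 10 ^ 4 := by
  rw [cost_eq, pr_eq]; push_cast; ring

instance properDec {n : ℕ} : ∀ (T : DTree n) (s : Finset (Fin n)), Decidable (T.Proper s)
  | .leaf _, _ => .isTrue trivial
  | .node i t0 t1, s =>
      haveI := properDec t0 (insert i s); haveI := properDec t1 (insert i s)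
      inferInstanceAs (Decidable (_ ∧ _ ∧ _))

abbrev Cube := Fin 4 → Option Bool
def memQ (Q : Cube) (a : Fin 4 → Bool) : Prop := ∀ i, (Q i).getD (a i) = a i
instance (Q : Cube) (a : Fin 4 → Bool) : Decidable (memQ Q a) :=
  inferInstanceAs (Decidable (∀ _, _))
def massN (Q : Cube) : ℕ := ∑ a : Fin 4 → Bool, if memQ Q a then prN a else 0
def constQ (Q : Cube) : Prop := ∀ a b, memQ Q a → memQ Q b → fN a = fN b
instance (Q : Cube) : Decidable (constQ Q) := inferInstanceAs (Decidable (∀ _ _, _))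
def upd (Q : Cube) (i : Fin 4) (b : Bool) : Cube := Function.update Q i (some b)
def gfun (W : Cube → ℕ) (Q : Cube) (i : Fin 4) : ℕ :=
  if Q i = none then cn i * massN Q + W (upd Q i false) + W (upd Q i true) else 10 ^ 9
def Wn : ℕ → Cube → ℕ
  | 0, _ => 0
  | k + 1, Q => if constQ Q then 0 else
      min (gfun (Wn k) Q 0) (min (gfun (Wn k) Q 1) (min (gfun (Wn k) Q 2) (gfun (Wn k) Q 3)))

lemma Wn_le (k : ℕ) (Q : Cube) (i : Fin 4) : Wn (k + 1) Q ≤ gfun (Wn k) Q i := by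
  show (if constQ Q then 0 else _) ≤ _
  split
  · exact Nat.zero_le _
  · fin_cases i
    · exact min_le_left _ _
    · exact le_trans (min_le_right _ _) (min_le_left _ _)
    · exact le_trans (min_le_right _ _) (le_trans (min_le_right _ _) (min_le_left _ _))
    · exact le_trans (min_le_right _ _) (le_trans (min_le_right _ _) (min_le_right _ _))

lemma Wn_const {Q : Cube} (h : constQ Q) (k : ℕ) : Wn k Q = 0 := by
  cases k <;> simp [Wn, h]

lemma memQ_upd_iff {Q : Cube} {i : Fin 4} (h : Q i = none) (b : Bool) (a : Fin 4 → Bool) :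
    memQ (upd Q i b) a ↔ memQ Q a ∧ a i = b := by
  constructor
  · intro H
    have hi := H i
    rw [upd, Function.update_self] at hi
    refine ⟨fun j => ?_, hi.symm ▸ rfl⟩
    by_cases hj : j = i
    · subst hj; rw [h]; rfl
    · have := H j; rwa [upd, Function.update_of_ne hj] at this
  · rintro ⟨H, hb⟩ j
    by_cases hj : j = i
    · subst hj; rw [upd, Function.update_self]; simp [hb]
    · rw [upd, Function.update_of_ne hj]; exact H j

lemma LB (T : DTree 4) : ∀ (k : ℕ) (Q : Cube),
    (∀ a, memQ Q a → T.eval a = fN a) →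
    Wn k Q ≤ ∑ a : Fin 4 → Bool, if memQ Q a then costN T a * prN a else 0 := by
  induction T with
  | leaf v =>
      intro k Q hc
      have hconst : constQ Q := fun a b ha hb => by
        rw [← hc a ha, ← hc b hb]; rfl
      rw [Wn_const hconst]
      exact Nat.zero_le _
  | node i t0 t1 ih0 ih1 =>
      intro k Q hc
      cases k with
      | zero => exact Nat.zero_le _
      | succ k =>
        by_cases hconst : constQ Q
        · rw [Wn_const hconst]; exact Nat.zero_le _
        · cases hQi : Q i with
          | some b =>
            have hai : ∀ a, memQ Q a → a i = b := by
              intro a ha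
              have := ha i
              rw [hQi] at this
              exact this.symm
            cases b with
            | false =>
              have hsub : ∀ a, memQ Q a → t0.eval a = fN a := by
                intro a ha
                have h1 := hc a ha
                rw [DTree.eval, hai a ha] at h1
                simpa using h1
              refine le_trans (ih0 (k + 1) Q hsub) (Finset.sum_le_sum fun a _ => ?_)
              split
              · rename_i hm
                have : costN t0 a ≤ costN (DTree.node i t0 t1) a := by
                  rw [costN, hai a hm]; simp
                exact Nat.mul_le_mul_right _ this
              · exact le_refl _
            | true =>
              have hsub : ∀ a, memQ Q a → t1.eval a = fN a := by
                intro a ha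
                have h1 := hc a ha
                rw [DTree.eval, hai a ha] at h1
                simpa using h1
              refine le_trans (ih1 (k + 1) Q hsub) (Finset.sum_le_sum fun a _ => ?_)
              split
              · rename_i hm
                have : costN t1 a ≤ costN (DTree.node i t0 t1) a := by
                  rw [costN, hai a hm]; simp
                exact Nat.mul_le_mul_right _ this
              · exact le_refl _
          | none =>
            have h0 : Wn k (upd Q i false) ≤
                ∑ a : Fin 4 → Bool, if memQ (upd Q i false) a then costN t0 a * prN a else 0 := by
              refine ih0 k _ fun a ha => ?_
              rw [memQ_upd_iff hQi] at ha
              have h1 := hc a ha.1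
              rw [DTree.eval, ha.2] at h1
              simpa using h1
            have h1 : Wn k (upd Q i true) ≤
                ∑ a : Fin 4 → Bool, if memQ (upd Q i true) a then costN t1 a * prN a else 0 := by
              refine ih1 k _ fun a ha => ?_
              rw [memQ_upd_iff hQi] at ha
              have h1 := hc a ha.1
              rw [DTree.eval, ha.2] at h1
              simpa using h1
            have hsplit : ∀ a : Fin 4 → Bool,
                (if memQ Q a then costN (DTree.node i t0 t1) a * prN a else 0) =
                (if memQ Q a then cn i * prN a else 0) +
                ((if memQ (upd Q i false) a then costN t0 a * prN a else 0) +
                 (if memQ (upd Q i true) a then costN t1 a * prN a else 0)) := by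
              intro a
              by_cases hm : memQ Q a
              · cases hx : a i
                · rw [if_pos hm, if_pos hm,
                      if_pos ((memQ_upd_iff hQi false a).mpr ⟨hm, hx⟩),
                      if_neg (fun h => by simpa [hx] using ((memQ_upd_iff hQi true a).mp h).2)]
                  simp [costN, hx]
                  ring
                · rw [if_pos hm, if_pos hm,
                      if_pos ((memQ_upd_iff hQi true a).mpr ⟨hm, hx⟩),
                      if_neg (fun h => by simpa [hx] using ((memQ_upd_iff hQi false a).mp h).2)]
                  simp [costN, hx]
                  ring
              · rw [if_neg hm, if_neg hm,
                    if_neg (fun h => hm ((memQ_upd_iff hQi false a).mp h).1),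
                    if_neg (fun h => hm ((memQ_upd_iff hQi true a).mp h).1)]
            calc Wn (k + 1) Q ≤ gfun (Wn k) Q i := Wn_le k Q i
              _ = cn i * massN Q + Wn k (upd Q i false) + Wn k (upd Q i true) := by
                    rw [gfun, if_pos hQi]
              _ ≤ (∑ a : Fin 4 → Bool, if memQ Q a then cn i * prN a else 0) +
                  ((∑ a : Fin 4 → Bool, if memQ (upd Q i false) a then costN t0 a * prN a else 0) +
                   (∑ a : Fin 4 → Bool, if memQ (upd Q i true) a then costN t1 a * prN a else 0)) := by
                    have hmass : cn i * massN Q =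
                        ∑ a : Fin 4 → Bool, if memQ Q a then cn i * prN a else 0 := by
                      rw [massN, Finset.mul_sum]
                      exact Finset.sum_congr rfl fun a _ => by split <;> simp
                    rw [hmass]
                    omega
              _ = ∑ a : Fin 4 → Bool, if memQ Q a then costN (DTree.node i t0 t1) a * prN a else 0 := by
                    rw [← Finset.sum_add_distrib, ← Finset.sum_add_distrib]
                    exact (Finset.sum_congr rfl fun a _ => (hsplit a).symm)

lemma Wn_val : Wn 4 (fun _ => none) = 146180000 := by decide

end Aux15

namespace Aux15

def T1 : DTree 4 :=
  .node 0 (.node 1 (.node 2 (.node 3 (.leaf 1) (.leaf 0)) (.leaf 0)) (.leaf 0)) (.leaf 0)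
def T2 : DTree 4 :=
  .node 0 (.node 2 (.node 3 (.node 1 (.leaf 0) (.leaf 1)) (.leaf 1))
      (.node 1 (.leaf 1) (.node 3 (.leaf 1) (.leaf 0))))
    (.node 1 (.node 3 (.leaf 1) (.node 2 (.leaf 1) (.leaf 0)))
      (.node 2 (.node 3 (.leaf 1) (.leaf 0)) (.leaf 0)))
def T3 : DTree 4 :=
  .node 1 (.node 0 (.leaf 0) (.node 2 (.leaf 0) (.node 3 (.leaf 0) (.leaf 1))))
    (.node 2 (.node 0 (.leaf 0) (.node 3 (.leaf 0) (.leaf 1)))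
      (.node 3 (.node 0 (.leaf 0) (.leaf 1)) (.leaf 1)))
def Topt : DTree 4 :=
  .node 2 (.node 0 (.node 3 (.node 1 (.leaf 0) (.leaf 1)) (.leaf 1))
      (.node 1 (.leaf 1) (.node 3 (.leaf 1) (.leaf 0))))
    (.node 1 (.node 0 (.leaf 1) (.node 3 (.leaf 1) (.leaf 0)))
      (.node 3 (.node 0 (.leaf 1) (.leaf 0)) (.leaf 0)))

lemma sum_eval (T : DTree 4) (P : (Fin 4 → Bool) → Prop) [DecidablePred P] :
    ∑ a ∈ Finset.univ.filter P, T.cost c4 a * pr p4 a =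
      ((∑ a : Fin 4 → Bool, if P a then costN T a * prN a else 0 : ℕ) : ℝ) / 10 ^ 4 := by
  rw [Finset.sum_filter, Nat.cast_sum, Finset.sum_div]
  refine Finset.sum_congr rfl fun a _ => ?_
  split
  · exact term_eq T a
  · simp

lemma bdd (P : (Fin 4 → Bool) → Prop) [DecidablePred P] (fj : (Fin 4 → Bool) → ℕ) :
    BddBelow {x : ℝ | ∃ T : DTree 4, T.Proper ∅ ∧ (∀ a, T.eval a = fj a) ∧
      x = ∑ a ∈ Finset.univ.filter P, T.cost c4 a * pr p4 a} := by
  refine ⟨0, ?_⟩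
  rintro x ⟨T, -, -, rfl⟩
  refine Finset.sum_nonneg fun a _ => ?_
  rw [term_eq]
  positivity

lemma bvc_le (P : (Fin 4 → Bool) → Prop) [DecidablePred P] (fj : (Fin 4 → Bool) → ℕ)
    (T : DTree 4) (hP : T.Proper ∅) (hev : ∀ a, T.eval a = fj a) (k : ℕ)
    (hk : (∑ a : Fin 4 → Bool, if P a then costN T a * prN a else 0) = k) :
    blockVerCost P fj ≤ (k : ℝ) / 10 ^ 4 := by
  refine csInf_le (bdd P fj) ⟨T, hP, hev, ?_⟩
  rw [sum_eval, hk]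

lemma memQ_top (a : Fin 4 → Bool) : memQ (fun _ => none) a := fun _ => rfl

end Aux15

open Aux15 in
theorem stmt15 :
    blockVerCost (fun a => N1 a = 0) (fun a => if N1 a = 0 then 1 else 0) +
      blockVerCost (fun a => N1 a = 1 ∨ N1 a = 2)
        (fun a => if N1 a = 1 ∨ N1 a = 2 then 1 else 0) +
      blockVerCost (fun a => N1 a = 3 ∨ N1 a = 4)
        (fun a => if N1 a = 3 ∨ N1 a = 4 then 1 else 0) <
    OPTcost p4 c4 (fun a => if N1 a = 1 ∨ N1 a = 2 then 1 else 0) := by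
  have h1 : blockVerCost (fun a => N1 a = 0) (fun a => if N1 a = 0 then 1 else 0) ≤
      (2394000 : ℝ) / 10 ^ 4 :=
    bvc_le _ _ T1 (by decide) (by decide) 2394000 (by decide)
  have h2 : blockVerCost (fun a => N1 a = 1 ∨ N1 a = 2)
      (fun a => if N1 a = 1 ∨ N1 a = 2 then 1 else 0) ≤ (102418000 : ℝ) / 10 ^ 4 :=
    bvc_le _ _ T2 (by decide) (by decide) 102418000 (by decide)
  have h3 : blockVerCost (fun a => N1 a = 3 ∨ N1 a = 4)
      (fun a => if N1 a = 3 ∨ N1 a = 4 then 1 else 0) ≤ (41298000 : ℝ) / 10 ^ 4 :=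
    bvc_le _ _ T3 (by decide) (by decide) 41298000 (by decide)
  have hOPT : (146180000 : ℝ) / 10 ^ 4 ≤
      OPTcost p4 c4 (fun a => if N1 a = 1 ∨ N1 a = 2 then 1 else 0) := by
    refine le_csInf ⟨_, Topt, by decide, by decide, rfl⟩ ?_
    rintro x ⟨T, -, hev, rfl⟩
    have hsum : ∑ a : Fin 4 → Bool, T.cost c4 a * pr p4 a =
        ((∑ a : Fin 4 → Bool, costN T a * prN a : ℕ) : ℝ) / 10 ^ 4 := by
      rw [Nat.cast_sum, Finset.sum_div]
      exact Finset.sum_congr rfl fun a _ => term_eq T a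
    rw [hsum]
    have hLB := LB T 4 (fun _ => none) (fun a _ => hev a)
    rw [Wn_val] at hLB
    have heq : (∑ a : Fin 4 → Bool, if memQ (fun _ => none) a then costN T a * prN a else 0) =
        ∑ a : Fin 4 → Bool, costN T a * prN a :=
      Finset.sum_congr rfl fun a _ => if_pos (memQ_top a)
    rw [heq] at hLB
    have : (146180000 : ℝ) ≤ ((∑ a : Fin 4 → Bool, costN T a * prN a : ℕ) : ℝ) := by
      exact_mod_cast hLB
    linarith
  calc _ ≤ (2394000 : ℝ) / 10 ^ 4 + (102418000 : ℝ) / 10 ^ 4 + (41298000 : ℝ) / 10 ^ 4 := by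
        gcongr
    _ < (146180000 : ℝ) / 10 ^ 4 := by norm_num
    _ ≤ _ := hOPT
end

section
/- Let f be an interval function: f(a) = 1 if α ≤ N₁(a) < β and f(a) = 0 otherwise, where 1 ≤ α < β ≤ n, giving three nonempty blocks M¹ = {a : N₁(a) < α}, M² = {a : α ≤ N₁(a) < β}, M³ = {a : N₁(a) ≥ β}. Then for every positive cost vector c, V(f) = V(g): the optimal expected verification cost of the Boolean function f equals the optimal expected verification cost of its block identification function g. -/
open Finset

/-- Minimum, over decision trees evaluating `h`, of the `ℓ`-cost of the tree:
the expected cost restricted to assignments `a` with `h a = ℓ`. -/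
noncomputable def minLCost {n : ℕ} (p c : Fin n → ℝ) (h : (Fin n → Bool) → ℕ)
    (ℓ : ℕ) : ℝ :=
  sInf {x : ℝ | ∃ T : DTree n, T.Proper ∅ ∧ (∀ a, T.eval a = h a) ∧
    x = ∑ a ∈ Finset.univ.filter (fun a => h a = ℓ), T.cost c a * pr p a}

/-!
Split `f = [α ≤ N1 < β]` along its blocks: `f¹ = [N1 < α]` is the threshold function "at least
`n + 1 - α` zeros" and `f³ = [β ≤ N1]` is "at least `β` ones", and `f` vanishes exactly where one
of them equals 1. Optimal `ℓ`-costs obey the usual recursion over subcubes (a leaf where the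
function is constant, otherwise the cheapest first query). For a threshold function "at least `θ`
values `v`", greedy is optimal: on a subcube still missing `Z` values `v`, each of the `Z` free
coordinates with least ratio `c i / Pr(a i = v)` is an optimal first query, by exchanging the
first two queries. For `f¹` and `f³` the two deficits add up to more than the number of free
coordinates, so the two greedy sets meet and some query is optimal for both at once. Induction
over subcubes then shows that the optimal 0-cost of `f` is the sum of the optimal 1-costs of `f¹`
and `f³`; the 1-cost of `f = f²` appears on both sides.
-/

open Function

namespace Verification

variable {n : ℕ}

section Subcube

def subcube (s : Finset (Fin n)) (b : Fin n → Bool) : Finset (Fin n → Bool) :=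
  {a | ∀ j ∉ s, a j = b j}

variable {s : Finset (Fin n)} {b : Fin n → Bool} {i : Fin n}

@[simp]
lemma mem_subcube {a : Fin n → Bool} : a ∈ subcube s b ↔ ∀ j ∉ s, a j = b j := by
  simp [subcube]

lemma self_mem_subcube : b ∈ subcube s b := mem_subcube.2 fun _ _ => rfl

lemma subcube_univ : subcube univ b = univ := by
  ext a
  simp

lemma subcube_erase_update (hi : i ∈ s) (x : Bool) :
    subcube (s.erase i) (update b i x) = {a ∈ subcube s b | a i = x} := by
  ext a
  simp only [mem_subcube, mem_filter, mem_erase, not_and]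
  constructor
  · intro h
    refine ⟨fun j hj => ?_, by simpa using h i (absurd rfl)⟩
    have hji : j ≠ i := by rintro rfl; exact hj hi
    simpa [hji] using h j fun _ => hj
  · rintro ⟨h, rfl⟩ j hj
    by_cases hji : j = i
    · simp [hji]
    · simpa [hji] using h j (hj hji)

lemma subcube_erase_update_subset (hi : i ∈ s) (x : Bool) :
    subcube (s.erase i) (update b i x) ⊆ subcube s b := by
  rw [subcube_erase_update hi]
  exact filter_subset _ _

lemma apply_eq_of_mem_subcube_erase_update {a : Fin n → Bool} {x : Bool}
    (ha : a ∈ subcube (s.erase i) (update b i x)) : a i = x := by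
  simpa using mem_subcube.1 ha i (by simp)

lemma sum_subcube_eq_sum_bool {M : Type*} [AddCommMonoid M] (hi : i ∈ s)
    (F : (Fin n → Bool) → M) :
    ∑ a ∈ subcube s b, F a = ∑ x, ∑ a ∈ subcube (s.erase i) (update b i x), F a := by
  simp only [subcube_erase_update hi]
  exact (sum_fiberwise _ _ _).symm

noncomputable def bitProb (p : Fin n → ℝ) (i : Fin n) (x : Bool) : ℝ :=
  if x then p i else 1 - p i

lemma bitProb_nonneg {p : Fin n → ℝ} (hp : ∀ i, 0 ≤ p i ∧ p i ≤ 1) (i : Fin n) (x : Bool) :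
    0 ≤ bitProb p i x := by
  cases x <;> simp [bitProb, hp i]

lemma pr_nonneg {p : Fin n → ℝ} (hp : ∀ i, 0 ≤ p i ∧ p i ≤ 1) (a : Fin n → Bool) : 0 ≤ pr p a :=
  prod_nonneg fun i _ => bitProb_nonneg hp i (a i)

lemma sum_pr_subcube (p : Fin n → ℝ) (s : Finset (Fin n)) (b : Fin n → Bool) :
    ∑ a ∈ subcube s b, pr p a = ∏ j ∈ sᶜ, bitProb p j (b j) := by
  have hcube : subcube s b = Fintype.piFinset fun j => if j ∈ s then univ else {b j} := by
    ext a
    simp only [mem_subcube, Fintype.mem_piFinset]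
    refine forall_congr' fun j => ?_
    by_cases hj : j ∈ s <;> simp [hj]
  have hfactor : ∀ j, ∑ x ∈ (if j ∈ s then univ else {b j}), bitProb p j x =
      if j ∈ sᶜ then bitProb p j (b j) else 1 := by
    intro j
    by_cases hj : j ∈ s
    · simp [hj, bitProb]
    · simp [hj]
  rw [hcube, ← univ_inter sᶜ, ← prod_ite_mem, ← Fintype.prod_congr _ _ hfactor, prod_univ_sum]
  rfl

lemma sum_pr_subcube_erase_update (p : Fin n → ℝ) (hi : i ∈ s) (x : Bool) :
    ∑ a ∈ subcube (s.erase i) (update b i x), pr p a =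
      bitProb p i x * ∑ a ∈ subcube s b, pr p a := by
  rw [sum_pr_subcube, sum_pr_subcube, compl_erase, prod_insert (by simpa using hi)]
  congr 1
  · simp
  · refine prod_congr rfl fun j hj => ?_
    have hji : j ≠ i := by rintro rfl; simp [hi] at hj
    simp [hji]

end Subcube

section OptimalCost

variable {p c : Fin n → ℝ} {h : (Fin n → Bool) → ℕ} {ℓ : ℕ} {s : Finset (Fin n)}
  {b : Fin n → Bool} {i j : Fin n}

variable (p c h ℓ) in
noncomputable def targetMass (s : Finset (Fin n)) (b : Fin n → Bool) : ℝ :=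
  ∑ a ∈ subcube s b with h a = ℓ, pr p a

variable (h) in
def ConstOn (s : Finset (Fin n)) (b : Fin n → Bool) : Prop :=
  ∀ a ∈ subcube s b, ∀ a' ∈ subcube s b, h a = h a'

variable (p c h ℓ) in
open scoped Classical in
/-- The least `ℓ`-cost of a decision tree evaluating `h` on `subcube s b`. -/
noncomputable def optCost (s : Finset (Fin n)) (b : Fin n → Bool) : ℝ :=
  if hs : ¬ ConstOn h s b ∧ s.Nonempty then
    s.attach.inf' (attach_nonempty_iff.2 hs.2) fun i =>
      c i * targetMass p h ℓ s b + ∑ x, optCost (s.erase i) (update b i x)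
  else 0
termination_by s.card
decreasing_by exact card_erase_lt_of_mem i.2

variable (p c h ℓ) in
noncomputable def queryCost (s : Finset (Fin n)) (b : Fin n → Bool) (i : Fin n) : ℝ :=
  c i * targetMass p h ℓ s b + ∑ x, optCost p c h ℓ (s.erase i) (update b i x)

lemma targetMass_eq_sum_bool (hi : i ∈ s) :
    targetMass p h ℓ s b = ∑ x, targetMass p h ℓ (s.erase i) (update b i x) := by
  simp only [targetMass, sum_filter]
  exact sum_subcube_eq_sum_bool hi _

lemma targetMass_nonneg (hp : ∀ i, 0 ≤ p i ∧ p i ≤ 1) : 0 ≤ targetMass p h ℓ s b :=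
  sum_nonneg fun a _ => pr_nonneg hp a

lemma constOn_empty : ConstOn h ∅ b := by
  intro a ha a' ha'
  obtain rfl : a = b := funext fun j => mem_subcube.1 ha j (notMem_empty j)
  obtain rfl : a' = a := funext fun j => mem_subcube.1 ha' j (notMem_empty j)
  rfl

lemma ConstOn.mono {s' : Finset (Fin n)} {b' : Fin n → Bool} (hh : ConstOn h s b)
    (hsub : subcube s' b' ⊆ subcube s b) : ConstOn h s' b' :=
  fun a ha a' ha' => hh a (hsub ha) a' (hsub ha')

lemma optCost_of_constOn (hh : ConstOn h s b) : optCost p c h ℓ s b = 0 := by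
  rw [optCost, dif_neg (fun hs => hs.1 hh)]

lemma optCost_le_queryCost_of_not_constOn (hh : ¬ ConstOn h s b) (hi : i ∈ s) :
    optCost p c h ℓ s b ≤ queryCost p c h ℓ s b i := by
  rw [optCost, dif_pos ⟨hh, ⟨i, hi⟩⟩]
  exact inf'_le _ (mem_attach s ⟨i, hi⟩)

lemma exists_optCost_eq_queryCost (hh : ¬ ConstOn h s b) :
    ∃ i ∈ s, optCost p c h ℓ s b = queryCost p c h ℓ s b i := by
  have hs : s.Nonempty := by
    by_contra hs
    rw [not_nonempty_iff_eq_empty] at hs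
    exact hh (hs ▸ constOn_empty)
  rw [optCost, dif_pos ⟨hh, hs⟩]
  obtain ⟨i, -, hi⟩ := exists_mem_eq_inf' (attach_nonempty_iff.2 hs)
    fun i : s => c i * targetMass p h ℓ s b + ∑ x, optCost p c h ℓ (s.erase i) (update b i x)
  exact ⟨i, i.2, hi⟩

lemma queryCost_of_constOn (hh : ConstOn h s b) (hi : i ∈ s) :
    queryCost p c h ℓ s b i = c i * targetMass p h ℓ s b := by
  rw [queryCost, add_eq_left]
  exact sum_eq_zero fun x _ => optCost_of_constOn (hh.mono (subcube_erase_update_subset hi x))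

lemma optCost_eq_queryCost_of_constOn (hh : ConstOn h s b) (hne : h b ≠ ℓ) (hi : i ∈ s) :
    optCost p c h ℓ s b = queryCost p c h ℓ s b i := by
  have hmass : targetMass p h ℓ s b = 0 :=
    sum_eq_zero fun a ha => absurd ((hh a (mem_filter.1 ha).1 b self_mem_subcube).symm.trans
      (mem_filter.1 ha).2) hne
  rw [optCost_of_constOn hh, queryCost_of_constOn hh hi, hmass, mul_zero]

variable (hp : ∀ i, 0 ≤ p i ∧ p i ≤ 1) (hc : ∀ i, 0 ≤ c i)
include hp hc

lemma optCost_nonneg : 0 ≤ optCost p c h ℓ s b := by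
  induction s using Finset.strongInduction generalizing b with
  | H s ih =>
    by_cases hh : ConstOn h s b
    · rw [optCost_of_constOn hh]
    · obtain ⟨i, hi, heq⟩ := exists_optCost_eq_queryCost (p := p) (c := c) (ℓ := ℓ) hh
      rw [heq, queryCost]
      exact add_nonneg (mul_nonneg (hc i) (targetMass_nonneg hp))
        (sum_nonneg fun x _ => ih _ (erase_ssubset hi))

lemma optCost_le_queryCost (hi : i ∈ s) : optCost p c h ℓ s b ≤ queryCost p c h ℓ s b i := by
  by_cases hh : ConstOn h s b
  · rw [optCost_of_constOn hh, queryCost]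
    exact add_nonneg (mul_nonneg (hc i) (targetMass_nonneg hp))
      (sum_nonneg fun x _ => optCost_nonneg hp hc)
  · exact optCost_le_queryCost_of_not_constOn hh hi

end OptimalCost

section TwoQueries

variable {p c : Fin n → ℝ} {h : (Fin n → Bool) → ℕ} {ℓ : ℕ} {s : Finset (Fin n)}
  {b : Fin n → Bool} {i j : Fin n}

variable (p c h ℓ) in
noncomputable def twoStepCost (s : Finset (Fin n)) (b : Fin n → Bool) (i j : Fin n) : ℝ :=
  c i * targetMass p h ℓ s b + ∑ x, queryCost p c h ℓ (s.erase i) (update b i x) j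

lemma queryCost_le_twoStepCost (hp : ∀ i, 0 ≤ p i ∧ p i ≤ 1) (hc : ∀ i, 0 ≤ c i) (hj : j ∈ s)
    (hji : j ≠ i) : queryCost p c h ℓ s b i ≤ twoStepCost p c h ℓ s b i j := by
  rw [queryCost, twoStepCost]
  gcongr
  exact optCost_le_queryCost hp hc (mem_erase.2 ⟨hji, hj⟩)

lemma queryCost_eq_twoStepCost
    (hopt : ∀ x, optCost p c h ℓ (s.erase i) (update b i x) =
      queryCost p c h ℓ (s.erase i) (update b i x) j) :
    queryCost p c h ℓ s b i = twoStepCost p c h ℓ s b i j := by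
  rw [queryCost, twoStepCost]
  exact congrArg _ (sum_congr rfl fun x _ => hopt x)

lemma twoStepCost_eq (hi : i ∈ s) :
    twoStepCost p c h ℓ s b i j = c i * targetMass p h ℓ s b + c j * targetMass p h ℓ s b +
      ∑ x, ∑ y, optCost p c h ℓ ((s.erase i).erase j) (update (update b i x) j y) := by
  simp only [twoStepCost, queryCost, sum_add_distrib, ← mul_sum, ← targetMass_eq_sum_bool hi,
    add_assoc]

lemma twoStepCost_comm (hi : i ∈ s) (hj : j ∈ s) (hij : i ≠ j) :
    twoStepCost p c h ℓ s b i j = twoStepCost p c h ℓ s b j i := by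
  rw [twoStepCost_eq hi, twoStepCost_eq hj, add_comm (c i * _), sum_comm,
    erase_right_comm]
  simp only [update_comm hij]

end TwoQueries

section Trees

variable {p c : Fin n → ℝ} {h : (Fin n → Bool) → ℕ} {ℓ : ℕ} {s : Finset (Fin n)}
  {b : Fin n → Bool} {i : Fin n}

variable (p c h ℓ) in
noncomputable def treeCost (T : DTree n) (s : Finset (Fin n)) (b : Fin n → Bool) : ℝ :=
  ∑ a ∈ subcube s b with h a = ℓ, T.cost c a * pr p a

lemma treeCost_node (hi : i ∈ s) (t₀ t₁ : DTree n) :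
    treeCost p c h ℓ (.node i t₀ t₁) s b = c i * targetMass p h ℓ s b +
      (treeCost p c h ℓ t₁ (s.erase i) (update b i true) +
        treeCost p c h ℓ t₀ (s.erase i) (update b i false)) := by
  simp only [treeCost, targetMass, DTree.cost, add_mul, sum_add_distrib, mul_sum]
  congr 1
  simp only [sum_filter, sum_subcube_eq_sum_bool hi, Fintype.sum_bool]
  congr 1 <;> refine sum_congr rfl fun a ha => ?_ <;>
    simp [apply_eq_of_mem_subcube_erase_update ha]

lemma eval_node_of_mem_subcube_erase_update {t₀ t₁ : DTree n} {a : Fin n → Bool} {x : Bool}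
    (ha : a ∈ subcube (s.erase i) (update b i x)) :
    (DTree.node i t₀ t₁).eval a = (if x then t₁ else t₀).eval a := by
  cases x <;> simp [DTree.eval, apply_eq_of_mem_subcube_erase_update ha]

lemma optCost_le_treeCost (hp : ∀ i, 0 ≤ p i ∧ p i ≤ 1) (hc : ∀ i, 0 ≤ c i) (T : DTree n)
    (hT : T.Proper sᶜ) (heval : ∀ a ∈ subcube s b, T.eval a = h a) :
    optCost p c h ℓ s b ≤ treeCost p c h ℓ T s b := by
  induction T generalizing s b with
  | leaf v =>
    have hh : ConstOn h s b := fun a ha a' ha' => (heval a ha).symm.trans (heval a' ha')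
    simp [optCost_of_constOn hh, treeCost, DTree.cost]
  | node i t₀ t₁ ih₀ ih₁ =>
    obtain ⟨hi, hT₀, hT₁⟩ := hT
    rw [← compl_erase] at hT₀ hT₁
    replace hi : i ∈ s := by simpa using hi
    have hchild : ∀ x, ∀ a ∈ subcube (s.erase i) (update b i x),
        (if x then t₁ else t₀).eval a = h a := fun x a ha =>
      (eval_node_of_mem_subcube_erase_update ha).symm.trans
        (heval a (subcube_erase_update_subset hi x ha))
    calc optCost p c h ℓ s b ≤ queryCost p c h ℓ s b i := optCost_le_queryCost hp hc hi
      _ ≤ _ := by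
        rw [queryCost, treeCost_node hi, Fintype.sum_bool]
        gcongr
        · exact ih₁ hT₁ (hchild true)
        · exact ih₀ hT₀ (hchild false)

lemma exists_tree_treeCost_eq_optCost (s : Finset (Fin n)) (b : Fin n → Bool) :
    ∃ T : DTree n, T.Proper sᶜ ∧ (∀ a ∈ subcube s b, T.eval a = h a) ∧
      treeCost p c h ℓ T s b = optCost p c h ℓ s b := by
  induction s using Finset.strongInduction generalizing b with
  | H s ih =>
    by_cases hh : ConstOn h s b
    · refine ⟨.leaf (h b), trivial, fun a ha => hh b self_mem_subcube a ha, ?_⟩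
      simp [optCost_of_constOn hh, treeCost, DTree.cost]
    obtain ⟨i, hi, hopt⟩ := exists_optCost_eq_queryCost (p := p) (c := c) (ℓ := ℓ) hh
    obtain ⟨T₀, hP₀, heval₀, hcost₀⟩ := ih _ (erase_ssubset hi) (update b i false)
    obtain ⟨T₁, hP₁, heval₁, hcost₁⟩ := ih _ (erase_ssubset hi) (update b i true)
    rw [compl_erase] at hP₀ hP₁
    refine ⟨.node i T₀ T₁, ⟨by simpa using hi, hP₀, hP₁⟩, fun a ha => ?_, ?_⟩
    · have ha' : a ∈ subcube (s.erase i) (update b i (a i)) := by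
        rw [subcube_erase_update hi]
        exact mem_filter.2 ⟨ha, rfl⟩
      rw [eval_node_of_mem_subcube_erase_update ha']
      cases hx : a i <;> rw [hx] at ha'
      exacts [heval₀ a ha', heval₁ a ha']
    · rw [treeCost_node hi, hcost₀, hcost₁, hopt, queryCost, Fintype.sum_bool]

theorem minLCost_eq_optCost (hp : ∀ i, 0 ≤ p i ∧ p i ≤ 1) (hc : ∀ i, 0 ≤ c i)
    (b : Fin n → Bool) : minLCost p c h ℓ = optCost p c h ℓ univ b := by
  have hcost : ∀ T : DTree n, treeCost p c h ℓ T univ b =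
      ∑ a ∈ univ.filter (fun a => h a = ℓ), T.cost c a * pr p a := fun T => by
    rw [treeCost, subcube_univ]
  have hlower : ∀ x ∈ {x : ℝ | ∃ T : DTree n, T.Proper ∅ ∧ (∀ a, T.eval a = h a) ∧
      x = ∑ a ∈ univ.filter (fun a => h a = ℓ), T.cost c a * pr p a},
      optCost p c h ℓ univ b ≤ x := by
    rintro x ⟨T, hT, heval, rfl⟩
    rw [← hcost]
    exact optCost_le_treeCost hp hc T (by rwa [compl_univ]) fun a _ => heval a
  obtain ⟨T, hT, heval, hopt⟩ := exists_tree_treeCost_eq_optCost (p := p) (c := c) (h := h)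
    (ℓ := ℓ) univ b
  have hmem : optCost p c h ℓ univ b ∈ {x : ℝ | ∃ T : DTree n, T.Proper ∅ ∧
      (∀ a, T.eval a = h a) ∧ x = ∑ a ∈ univ.filter (fun a => h a = ℓ), T.cost c a * pr p a} :=
    ⟨T, by rwa [← compl_univ], fun a => heval a (by simp [subcube_univ]), by rw [← hopt, hcost]⟩
  exact le_antisymm (csInf_le ⟨_, hlower⟩ hmem) (le_csInf ⟨_, hmem⟩ hlower)

end Trees

section Counting

variable {s : Finset (Fin n)} {b a : Fin n → Bool} {i : Fin n} {v : Bool}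

def count (v : Bool) (a : Fin n → Bool) : ℕ := #{j | a j = v}

def fixedCount (v : Bool) (s : Finset (Fin n)) (b : Fin n → Bool) : ℕ := #{j ∈ sᶜ | b j = v}

lemma count_eq_fixedCount_add (ha : a ∈ subcube s b) :
    count v a = fixedCount v s b + #{j ∈ s | a j = v} := by
  have hout : {j ∈ sᶜ | a j = v} = {j ∈ sᶜ | b j = v} :=
    filter_congr fun j hj => by rw [mem_subcube.1 ha j (mem_compl.1 hj)]
  rw [count, fixedCount, ← hout,
    ← card_union_of_disjoint (disjoint_filter_filter disjoint_compl_left), ← filter_union, show sᶜ ∪ s = univ from compl_sup_eq_top]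

lemma count_mem_Icc (ha : a ∈ subcube s b) :
    count v a ∈ Set.Icc (fixedCount v s b) (fixedCount v s b + #s) := by
  rw [count_eq_fixedCount_add ha]
  exact ⟨Nat.le_add_right _ _, Nat.add_le_add_left (card_filter_le _ _) _⟩

lemma exists_mem_subcube_count_eq {k : ℕ}
    (hk : k ∈ Set.Icc (fixedCount v s b) (fixedCount v s b + #s)) :
    ∃ a ∈ subcube s b, count v a = k := by
  obtain ⟨t, hts, htcard⟩ := exists_subset_card_eq (s := s) (n := k - fixedCount v s b)
    (by have := hk.2; omega)
  set a : Fin n → Bool := fun j => if j ∈ t then v else if j ∈ s then !v else b j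
  have ha : a ∈ subcube s b := mem_subcube.2 fun j hj => by
    simp [a, hj, show j ∉ t from fun hjt => hj (hts hjt)]
  refine ⟨a, ha, ?_⟩
  have hfree : {j ∈ s | a j = v} = t := by
    ext j
    by_cases hjt : j ∈ t
    · simp [a, hjt, hts hjt]
    · by_cases hjs : j ∈ s <;> simp [a, hjt, hjs]
  rw [count_eq_fixedCount_add ha, hfree, htcard]
  have := hk.1
  omega

lemma fixedCount_erase_update (hi : i ∈ s) (x : Bool) :
    fixedCount v (s.erase i) (update b i x) = fixedCount v s b + if x = v then 1 else 0 := by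
  have hout : {j ∈ sᶜ | update b i x j = v} = {j ∈ sᶜ | b j = v} :=
    filter_congr fun j hj => by rw [update_of_ne (by rintro rfl; exact mem_compl.1 hj hi)]
  rw [fixedCount, compl_erase, filter_insert, hout, fixedCount, update_self]
  split_ifs with hx
  · rw [card_insert_of_notMem (by simp [hi])]
  · rfl

lemma count_false_add_count_true (a : Fin n → Bool) : count false a + count true a = n := by
  rw [count, count, ← card_union_of_disjoint (disjoint_filter.2 fun j _ h => by simp [h]),
    ← filter_or]
  simp

lemma fixedCount_false_add_fixedCount_true (s : Finset (Fin n)) (b : Fin n → Bool) :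
    fixedCount false s b + fixedCount true s b + #s = n := by
  rw [fixedCount, fixedCount, ← card_union_of_disjoint (disjoint_filter.2 fun j _ h => by simp [h]),
    ← filter_or, filter_true_of_mem fun j _ => by cases b j <;> simp, card_compl, Fintype.card_fin,
    Nat.sub_add_cancel (card_le_univ s |>.trans_eq (Fintype.card_fin n))]

lemma constOn_comp_count_iff (φ : ℕ → ℕ) :
    ConstOn (fun a => φ (count v a)) s b ↔
      ∀ k ∈ Set.Icc (fixedCount v s b) (fixedCount v s b + #s),
        ∀ k' ∈ Set.Icc (fixedCount v s b) (fixedCount v s b + #s), φ k = φ k' := by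
  constructor
  · intro hh k hk k' hk'
    obtain ⟨a, ha, rfl⟩ := exists_mem_subcube_count_eq hk
    obtain ⟨a', ha', rfl⟩ := exists_mem_subcube_count_eq hk'
    exact hh a ha a' ha'
  · intro hφ a ha a' ha'
    exact hφ _ (count_mem_Icc ha) _ (count_mem_Icc ha')

end Counting

section Rank

variable {ι κ : Type*} [LinearOrder κ] {f g : ι → κ} {s : Finset ι} {i j : ι}

variable (f) in
def rank (s : Finset ι) (i : ι) : ℕ := #{j ∈ s | f j < f i}

lemma rank_eq_zero (h : ∀ j ∈ s, f i ≤ f j) : rank f s i = 0 :=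
  card_eq_zero.2 <| filter_false_of_mem fun j hj => not_lt.2 (h j hj)

lemma rank_erase_add_one [DecidableEq ι] (hj : j ∈ s) (hlt : f j < f i) :
    rank f (s.erase j) i + 1 = rank f s i := by
  rw [rank, rank, filter_erase, card_erase_add_one (mem_filter.2 ⟨hj, hlt⟩)]

lemma rank_lt_card (hi : i ∈ s) : rank f s i < #s :=
  card_lt_card <| filter_ssubset.2 ⟨i, hi, lt_irrefl _⟩

lemma rank_lt_rank (hi : i ∈ s) (hlt : f i < f j) : rank f s i < rank f s j :=
  card_lt_card <| (ssubset_iff_of_subset fun _ hk =>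
      mem_filter.2 ⟨(mem_filter.1 hk).1, (mem_filter.1 hk).2.trans hlt⟩).2
    ⟨i, mem_filter.2 ⟨hi, hlt⟩, fun h => lt_irrefl _ (mem_filter.1 h).2⟩

lemma rank_injOn (hf : Injective f) : Set.InjOn (rank f s) s := by
  intro i hi j hj hij
  by_contra hne
  rcases (hf.ne hne).lt_or_gt with hlt | hlt
  · exact (rank_lt_rank hi hlt).ne hij
  · exact (rank_lt_rank hj hlt).ne hij.symm

lemma min_le_card_filter_rank_lt (hf : Injective f) (t : ℕ) :
    min t #s ≤ #{i ∈ s | rank f s i < t} := by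
  have hhigh : #{i ∈ s | ¬ rank f s i < t} ≤ #s - t := by
    simpa using card_le_card_of_injOn (rank f s) (t := Ico t #s)
      (fun i hi => by
        simp only [coe_filter] at hi
        simpa using ⟨hi.2, rank_lt_card hi.1⟩)
      ((rank_injOn hf).mono fun i hi => (mem_filter.1 hi).1)
  have := card_filter_add_card_filter_not (s := s) (fun i => rank f s i < t)
  omega

lemma exists_rank_lt_and_rank_lt [DecidableEq ι] (hf : Injective f) (hg : Injective g)
    (hs : s.Nonempty) (ht₁ : 0 < t₁) (ht₂ : 0 < t₂) (hsum : #s < t₁ + t₂) :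
    ∃ i ∈ s, rank f s i < t₁ ∧ rank g s i < t₂ := by
  have h₁ := min_le_card_filter_rank_lt (s := s) hf t₁
  have h₂ := min_le_card_filter_rank_lt (s := s) hg t₂
  have hunion := card_le_card (union_subset (filter_subset (fun i => rank f s i < t₁) s)
    (filter_subset (fun i => rank g s i < t₂) s))
  have hinter := card_inter_add_card_union {i ∈ s | rank f s i < t₁} {i ∈ s | rank g s i < t₂}
  have hpos := hs.card_pos
  obtain ⟨i, hi⟩ : ({i ∈ s | rank f s i < t₁} ∩ {i ∈ s | rank g s i < t₂}).Nonempty := by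
    rw [← card_pos]
    omega
  simp only [mem_inter, mem_filter] at hi
  exact ⟨i, hi.1.1, hi.1.2, hi.2.2⟩

end Rank

lemma sum_bool_eq_add_not {M : Type*} [AddCommMonoid M] (f : Bool → M) (v : Bool) :
    ∑ x, f x = f v + f !v := by
  cases v <;> simp [add_comm]

section Threshold

variable {p c : Fin n → ℝ} {v : Bool} {θ : ℕ} {s : Finset (Fin n)} {b : Fin n → Bool}
  {i k m : Fin n}

def threshold (v : Bool) (θ : ℕ) (a : Fin n → Bool) : ℕ := if θ ≤ count v a then 1 else 0

lemma constOn_threshold_iff :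
    ConstOn (threshold v θ) s b ↔ θ ≤ fixedCount v s b ∨ fixedCount v s b + #s < θ := by
  refine (constOn_comp_count_iff fun k => if θ ≤ k then 1 else 0).trans ⟨fun hφ => ?_, ?_⟩
  · by_contra! hθ
    have := hφ _ ⟨le_rfl, Nat.le_add_right _ _⟩ θ ⟨hθ.1.le, hθ.2⟩
    simp [not_le.2 hθ.1] at this
  · rintro hθ k hk k' hk'
    have := hk.1; have := hk.2; have := hk'.1; have := hk'.2
    split_ifs <;> omega

lemma targetMass_threshold_of_le (p : Fin n → ℝ) (hθ : θ ≤ fixedCount v s b) :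
    targetMass p (threshold v θ) 1 s b = ∑ a ∈ subcube s b, pr p a := by
  rw [targetMass, filter_true_of_mem]
  exact fun a ha => if_pos (hθ.trans (count_mem_Icc ha).1)

noncomputable def ratioKey (p c : Fin n → ℝ) (v : Bool) (i : Fin n) : ℝ ×ₗ Fin n :=
  toLex (c i / bitProb p i v, i)

lemma ratioKey_injective : Injective (ratioKey p c v) := fun _ _ hij =>
  congrArg (fun x => (ofLex x).2) hij

lemma bitProb_pos (hp : ∀ i, 0 < p i ∧ p i < 1) (i : Fin n) (x : Bool) : 0 < bitProb p i x := by
  cases x <;> simp [bitProb, hp i]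

lemma mul_bitProb_le_of_ratioKey_le (hp : ∀ i, 0 < p i ∧ p i < 1)
    (hkey : ratioKey p c v m ≤ ratioKey p c v k) : c m * bitProb p k v ≤ c k * bitProb p m v := by
  have : c m / bitProb p m v ≤ c k / bitProb p k v := by
    rcases Prod.Lex.toLex_le_toLex.1 hkey with h | ⟨h, -⟩
    exacts [h.le, h.le]
  rwa [div_le_div_iff₀ (bitProb_pos hp m v) (bitProb_pos hp k v)] at this

/-- With a single `v` missing, the `v`-branch of every first query is decided, so both sides
differ from the common `twoStepCost` by explicit terms, compared via the ratios. -/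
lemma queryCost_le_queryCost_of_deficit_one (hp : ∀ i, 0 < p i ∧ p i < 1) (hc : ∀ i, 0 ≤ c i)
    (hθ : θ = fixedCount v s b + 1) (hm : m ∈ s) (hk : k ∈ s) (hmk : m ≠ k)
    (hkey : ratioKey p c v m ≤ ratioKey p c v k)
    (hopt : optCost p c (threshold v θ) 1 (s.erase k) (update b k !v) =
      queryCost p c (threshold v θ) 1 (s.erase k) (update b k !v) m) :
    queryCost p c (threshold v θ) 1 s b m ≤ queryCost p c (threshold v θ) 1 s b k := by
  have hp' : ∀ i, 0 ≤ p i ∧ p i ≤ 1 := fun i => ⟨(hp i).1.le, (hp i).2.le⟩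
  have hdecided : ∀ j ∈ s, θ ≤ fixedCount v (s.erase j) (update b j v) := fun j hj => by
    rw [fixedCount_erase_update hj, hθ]
    simp
  have hconst : ∀ j ∈ s, ConstOn (threshold v θ) (s.erase j) (update b j v) := fun j hj =>
    constOn_threshold_iff.2 (Or.inl (hdecided j hj))
  have hk_eq : queryCost p c (threshold v θ) 1 s b k +
      c m * targetMass p (threshold v θ) 1 (s.erase k) (update b k v) =
        twoStepCost p c (threshold v θ) 1 s b k m := by
    rw [queryCost, twoStepCost, sum_bool_eq_add_not _ v, sum_bool_eq_add_not _ v,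
      optCost_of_constOn (hconst k hk), queryCost_of_constOn (hconst k hk) (mem_erase.2 ⟨hmk, hm⟩),
      hopt]
    ring
  have hm_le : queryCost p c (threshold v θ) 1 s b m +
      c k * targetMass p (threshold v θ) 1 (s.erase m) (update b m v) ≤
        twoStepCost p c (threshold v θ) 1 s b m k := by
    rw [queryCost, twoStepCost, sum_bool_eq_add_not _ v, sum_bool_eq_add_not _ v,
      optCost_of_constOn (hconst m hm),
      queryCost_of_constOn (hconst m hm) (mem_erase.2 ⟨hmk.symm, hk⟩)]
    linarith [optCost_le_queryCost (h := threshold v θ) (ℓ := 1) (s := s.erase m)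
      (b := update b m !v) hp' hc (mem_erase.2 ⟨hmk.symm, hk⟩)]
  have hratio : c m * targetMass p (threshold v θ) 1 (s.erase k) (update b k v) ≤
      c k * targetMass p (threshold v θ) 1 (s.erase m) (update b m v) := by
    rw [targetMass_threshold_of_le p (hdecided k hk), targetMass_threshold_of_le p (hdecided m hm),
      sum_pr_subcube_erase_update p hk, sum_pr_subcube_erase_update p hm, ← mul_assoc,
      ← mul_assoc]
    exact mul_le_mul_of_nonneg_right (mul_bitProb_le_of_ratioKey_le hp hkey)
      (sum_nonneg fun a _ => pr_nonneg hp' a)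
  linarith [twoStepCost_comm (p := p) (c := c) (h := threshold v θ) (ℓ := 1) (b := b) hm hk hmk]

/-- Exchange argument: querying `m` and then `k` costs no more than `k` and then `m`. -/
lemma queryCost_le_queryCost_of_ratioKey_le (hp : ∀ i, 0 < p i ∧ p i < 1) (hc : ∀ i, 0 ≤ c i)
    (hfix : fixedCount v s b < θ) (hm : m ∈ s) (hk : k ∈ s) (hmk : m ≠ k)
    (hkey : ratioKey p c v m ≤ ratioKey p c v k)
    (hopt : ∀ x, fixedCount v (s.erase k) (update b k x) < θ →
      optCost p c (threshold v θ) 1 (s.erase k) (update b k x) =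
        queryCost p c (threshold v θ) 1 (s.erase k) (update b k x) m) :
    queryCost p c (threshold v θ) 1 s b m ≤ queryCost p c (threshold v θ) 1 s b k := by
  by_cases hθ : θ = fixedCount v s b + 1
  · refine queryCost_le_queryCost_of_deficit_one hp hc hθ hm hk hmk hkey (hopt _ ?_)
    rw [fixedCount_erase_update hk]
    simpa using hfix
  calc queryCost p c (threshold v θ) 1 s b m
      ≤ twoStepCost p c (threshold v θ) 1 s b m k :=
        queryCost_le_twoStepCost (fun i => ⟨(hp i).1.le, (hp i).2.le⟩) hc hk hmk.symm
    _ = twoStepCost p c (threshold v θ) 1 s b k m := twoStepCost_comm hm hk hmk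
    _ = queryCost p c (threshold v θ) 1 s b k := (queryCost_eq_twoStepCost fun x => hopt x (by
        rw [fixedCount_erase_update hk]
        split_ifs <;> omega)).symm

/-- Greedy is optimal: the coordinate `m` of least ratio is an optimal first query, and any other
coordinate of small rank ties with it after exchanging the first two queries. -/
theorem optCost_threshold_eq_queryCost_of_rank_lt (hp : ∀ i, 0 < p i ∧ p i < 1)
    (hc : ∀ i, 0 ≤ c i) (hfix : fixedCount v s b < θ) (hi : i ∈ s)
    (hrank : rank (ratioKey p c v) s i + fixedCount v s b < θ) :
    optCost p c (threshold v θ) 1 s b = queryCost p c (threshold v θ) 1 s b i := by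
  have hp' : ∀ i, 0 ≤ p i ∧ p i ≤ 1 := fun i => ⟨(hp i).1.le, (hp i).2.le⟩
  induction s using Finset.strongInduction generalizing b i with
  | H s ih =>
  by_cases hact : fixedCount v s b + #s < θ
  · refine optCost_eq_queryCost_of_constOn (constOn_threshold_iff.2 (Or.inr hact)) ?_ hi
    have := (count_mem_Icc (v := v) (self_mem_subcube (s := s) (b := b))).2.trans_lt hact
    simpa [threshold] using this
  have hchild : ∀ j ∈ s, ∀ x, fixedCount v (s.erase j) (update b j x) ≤ fixedCount v s b + 1 :=
    fun j hj x => by rw [fixedCount_erase_update hj]; split_ifs <;> omega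
  obtain ⟨m, hm, hmin⟩ := exists_min_image s (ratioKey p c v) ⟨i, hi⟩
  have ih_m : ∀ k ∈ s, k ≠ m → ∀ x, fixedCount v (s.erase k) (update b k x) < θ →
      optCost p c (threshold v θ) 1 (s.erase k) (update b k x) =
        queryCost p c (threshold v θ) 1 (s.erase k) (update b k x) m := fun k hk hkm x hx =>
    ih _ (erase_ssubset hk) hx (mem_erase.2 ⟨hkm.symm, hm⟩)
      (by rwa [rank_eq_zero fun j hj => hmin j (mem_of_mem_erase hj), zero_add])
  have hm_opt : optCost p c (threshold v θ) 1 s b = queryCost p c (threshold v θ) 1 s b m := by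
    refine le_antisymm (optCost_le_queryCost hp' hc hm) ?_
    obtain ⟨k, hk, hk_opt⟩ := exists_optCost_eq_queryCost (p := p) (c := c) (ℓ := 1)
      ((constOn_threshold_iff (v := v) (θ := θ) (s := s) (b := b)).not.2 (by omega))
    rw [hk_opt]
    rcases eq_or_ne k m with rfl | hkm
    · rfl
    exact queryCost_le_queryCost_of_ratioKey_le hp hc hfix hm hk hkm.symm (hmin k hk)
      (ih_m k hk hkm)
  rcases eq_or_ne i m with rfl | him
  · exact hm_opt
  have hrank_erase := rank_erase_add_one hm
    (lt_of_le_of_ne (hmin i hi) (ratioKey_injective.ne him.symm))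
  calc optCost p c (threshold v θ) 1 s b = queryCost p c (threshold v θ) 1 s b m := hm_opt
    _ = twoStepCost p c (threshold v θ) 1 s b m i := queryCost_eq_twoStepCost fun x =>
      ih _ (erase_ssubset hm) (by have := hchild m hm x; omega) (mem_erase.2 ⟨him, hi⟩)
        (by have := hchild m hm x; omega)
    _ = twoStepCost p c (threshold v θ) 1 s b i m := twoStepCost_comm hm hi him.symm
    _ = queryCost p c (threshold v θ) 1 s b i := (queryCost_eq_twoStepCost fun x =>
      ih_m i hi him x (by have := hchild i hi x; omega)).symm

end Threshold

section Additivity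

variable {p c : Fin n → ℝ} {h h₁ h₂ : (Fin n → Bool) → ℕ} {ℓ ℓ₁ ℓ₂ : ℕ}

lemma targetMass_eq_add (hsplit : ∀ a, h a = ℓ ↔ h₁ a = ℓ₁ ∨ h₂ a = ℓ₂)
    (hdisj : ∀ a, h₁ a = ℓ₁ → h₂ a ≠ ℓ₂) (s : Finset (Fin n)) (b : Fin n → Bool) :
    targetMass p h ℓ s b = targetMass p h₁ ℓ₁ s b + targetMass p h₂ ℓ₂ s b := by
  rw [targetMass, targetMass, targetMass, ← sum_union (disjoint_filter.2 fun a _ => hdisj a),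
    ← filter_or]
  exact sum_congr (filter_congr fun a _ => hsplit a) fun _ _ => rfl

theorem optCost_eq_add_of_exists_common_optimal_query (hp : ∀ i, 0 ≤ p i ∧ p i ≤ 1)
    (hc : ∀ i, 0 ≤ c i) (hsplit : ∀ a, h a = ℓ ↔ h₁ a = ℓ₁ ∨ h₂ a = ℓ₂)
    (hdisj : ∀ a, h₁ a = ℓ₁ → h₂ a ≠ ℓ₂)
    (hconst : ∀ s b, ConstOn h s b → ConstOn h₁ s b ∧ ConstOn h₂ s b)
    (hcommon : ∀ s b, ¬ ConstOn h s b → ∃ i ∈ s,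
      optCost p c h₁ ℓ₁ s b = queryCost p c h₁ ℓ₁ s b i ∧
        optCost p c h₂ ℓ₂ s b = queryCost p c h₂ ℓ₂ s b i)
    (s : Finset (Fin n)) (b : Fin n → Bool) :
    optCost p c h ℓ s b = optCost p c h₁ ℓ₁ s b + optCost p c h₂ ℓ₂ s b := by
  induction s using Finset.strongInduction generalizing b with
  | H s ih =>
  by_cases hh : ConstOn h s b
  · obtain ⟨hh₁, hh₂⟩ := hconst s b hh
    rw [optCost_of_constOn hh, optCost_of_constOn hh₁, optCost_of_constOn hh₂, add_zero]
  have hquery : ∀ i ∈ s, queryCost p c h ℓ s b i =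
      queryCost p c h₁ ℓ₁ s b i + queryCost p c h₂ ℓ₂ s b i := fun i hi => by
    simp only [queryCost, targetMass_eq_add hsplit hdisj, ih _ (erase_ssubset hi),
      sum_add_distrib]
    ring
  obtain ⟨i, hi, hopt₁, hopt₂⟩ := hcommon s b hh
  obtain ⟨k, hk, hopt⟩ := exists_optCost_eq_queryCost (p := p) (c := c) (ℓ := ℓ) hh
  apply le_antisymm
  · calc optCost p c h ℓ s b ≤ queryCost p c h ℓ s b i := optCost_le_queryCost hp hc hi
      _ = _ := by rw [hquery i hi, hopt₁, hopt₂]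
  · calc optCost p c h₁ ℓ₁ s b + optCost p c h₂ ℓ₂ s b
        ≤ queryCost p c h₁ ℓ₁ s b k + queryCost p c h₂ ℓ₂ s b k :=
          add_le_add (optCost_le_queryCost hp hc hk) (optCost_le_queryCost hp hc hk)
      _ = _ := by rw [hopt, hquery k hk]

end Additivity

section Interval

variable {p c : Fin n → ℝ} {α β : ℕ}

lemma threshold_false_eq (α : ℕ) :
    threshold false (n + 1 - α) = fun a : Fin n → Bool => if N1 a < α then 1 else 0 := by
  funext a
  have := count_false_add_count_true a
  change (if n + 1 - α ≤ count false a then 1 else 0) = if count true a < α then 1 else 0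
  split_ifs <;> omega

/-- The values of `N1` on a subcube form an interval of integers, which cannot contain both
`α - 1` and `α`, or both `β - 1` and `β`, without the interval function changing value. -/
lemma constOn_thresholds_of_constOn_interval (hαβ : α < β) {s : Finset (Fin n)}
    {b : Fin n → Bool} (hh : ConstOn (fun a => if α ≤ N1 a ∧ N1 a < β then 1 else 0) s b) :
    ConstOn (threshold false (n + 1 - α)) s b ∧ ConstOn (threshold true β) s b := by
  have H := (constOn_comp_count_iff (v := true) fun k => if α ≤ k ∧ k < β then 1 else 0).1 hh
  have hn := fixedCount_false_add_fixedCount_true s b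
  refine ⟨constOn_threshold_iff.2 ?_, constOn_threshold_iff.2 ?_⟩
  · by_contra! hα
    have := H (α - 1) ⟨by omega, by omega⟩ α ⟨by omega, by omega⟩
    split_ifs at this <;> omega
  · by_contra! hβ
    have := H (β - 1) ⟨by omega, by omega⟩ β ⟨by omega, by omega⟩
    split_ifs at this <;> omega

lemma exists_common_optimal_query_of_not_constOn_interval (hp : ∀ i, 0 < p i ∧ p i < 1)
    (hc : ∀ i, 0 ≤ c i) (hαβ : α ≤ β) {s : Finset (Fin n)} {b : Fin n → Bool}
    (hh : ¬ ConstOn (fun a => if α ≤ N1 a ∧ N1 a < β then 1 else 0) s b) :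
    ∃ i ∈ s,
      optCost p c (threshold false (n + 1 - α)) 1 s b =
        queryCost p c (threshold false (n + 1 - α)) 1 s b i ∧
      optCost p c (threshold true β) 1 s b = queryCost p c (threshold true β) 1 s b i := by
  have H := (constOn_comp_count_iff (v := true) fun k => if α ≤ k ∧ k < β then 1 else 0).not.1 hh
  push Not at H
  obtain ⟨k, ⟨hk₁, hk₂⟩, k', ⟨hk₁', hk₂'⟩, hne⟩ := H
  have hn := fixedCount_false_add_fixedCount_true s b
  have hbounds : α ≤ fixedCount true s b + #s ∧ fixedCount true s b < β ∧ 0 < #s := by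
    split_ifs at hne <;> omega
  obtain ⟨i, hi, hrank₁, hrank₂⟩ := exists_rank_lt_and_rank_lt
    (ratioKey_injective (p := p) (c := c) (v := false))
    (ratioKey_injective (p := p) (c := c) (v := true)) (card_pos.1 hbounds.2.2)
    (t₁ := n + 1 - α - fixedCount false s b) (t₂ := β - fixedCount true s b)
    (by omega) (by omega) (by omega)
  exact ⟨i, hi, optCost_threshold_eq_queryCost_of_rank_lt hp hc (by omega) hi (by omega),
    optCost_threshold_eq_queryCost_of_rank_lt hp hc (by omega) hi (by omega)⟩

theorem optCost_interval_eq_add (hp : ∀ i, 0 < p i ∧ p i < 1) (hc : ∀ i, 0 ≤ c i)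
    (hαβ : α < β) (s : Finset (Fin n)) (b : Fin n → Bool) :
    optCost p c (fun a => if α ≤ N1 a ∧ N1 a < β then 1 else 0) 0 s b =
      optCost p c (threshold false (n + 1 - α)) 1 s b + optCost p c (threshold true β) 1 s b := by
  refine optCost_eq_add_of_exists_common_optimal_query (fun i => ⟨(hp i).1.le, (hp i).2.le⟩) hc
    (fun a => ?_) (fun a => ?_) (fun _ _ => constOn_thresholds_of_constOn_interval hαβ)
    (fun _ _ => exists_common_optimal_query_of_not_constOn_interval hp hc hαβ.le) s b
  · rw [threshold_false_eq]
    change _ ↔ _ ∨ (if β ≤ N1 a then 1 else 0) = 1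
    split_ifs <;> simp <;> omega
  · rw [threshold_false_eq]
    change _ → (if β ≤ N1 a then 1 else 0) ≠ 1
    split_ifs <;> simp
    omega

end Interval

end Verification

open Verification in
theorem stmt17_general {n : ℕ} (p c : Fin n → ℝ)
    (hp : ∀ i, 0 < p i ∧ p i < 1) (hc : ∀ i, 0 < c i)
    (α β : ℕ) (hαβ : α < β) :
    minLCost p c (fun a => if α ≤ N1 a ∧ N1 a < β then 1 else 0) 0 +
      minLCost p c (fun a => if α ≤ N1 a ∧ N1 a < β then 1 else 0) 1 =
    minLCost p c (fun a => if N1 a < α then 1 else 0) 1 +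
      minLCost p c (fun a => if α ≤ N1 a ∧ N1 a < β then 1 else 0) 1 +
      minLCost p c (fun a => if β ≤ N1 a then 1 else 0) 1 := by
  have hp' : ∀ i, 0 ≤ p i ∧ p i ≤ 1 := fun i => ⟨(hp i).1.le, (hp i).2.le⟩
  have hc' : ∀ i, 0 ≤ c i := fun i => (hc i).le
  have hadd := optCost_interval_eq_add hp hc' hαβ univ fun _ => true
  rw [← threshold_false_eq, show (fun a : Fin n → Bool => if β ≤ N1 a then 1 else 0) =
    threshold true β from rfl]
  simp only [minLCost_eq_optCost hp' hc' fun _ => true]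
  linarith

theorem stmt17 {n : ℕ} (hn : 2 ≤ n) (p c : Fin n → ℝ)
    (hp : ∀ i, 0 < p i ∧ p i < 1) (hc : ∀ i, 0 < c i)
    (α β : ℕ) (hα1 : 1 ≤ α) (hαβ : α < β) (hβn : β ≤ n) :
    minLCost p c (fun a => if α ≤ N1 a ∧ N1 a < β then 1 else 0) 0 +
      minLCost p c (fun a => if α ≤ N1 a ∧ N1 a < β then 1 else 0) 1 =
    minLCost p c (fun a => if N1 a < α then 1 else 0) 1 +
      minLCost p c (fun a => if α ≤ N1 a ∧ N1 a < β then 1 else 0) 1 +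
      minLCost p c (fun a => if β ≤ N1 a then 1 else 0) 1 :=
  stmt17_general p c hp hc α β hαβ
end

section
/- For arbitrary positive costs c, let 1 ≤ k ≤ n and let f_k be the k-of-n function, f_k(a) = 1 iff N₁(a) ≥ k. Let σ list the indices in nondecreasing order of c i / p i, and for each a with f_k(a) = 1 let v₁(a) be the sum of c i over the shortest σ-prefix containing k indices i with a i = true; let σ' list the indices in nondecreasing order of c i / (1 − p i), and for each a with f_k(a) = 0 let v₀(a) be the sum of c i over the shortest σ'-prefix containing n − k + 1 indices i with a i = false. Then for every decision tree T evaluating f_k: Σ_{a : f_k(a)=1} v₁(a)·Pr(a) ≤ (1-cost of T) and Σ_{a : f_k(a)=0} v₀(a)·Pr(a) ≤ (0-cost of T). That is, querying in nondecreasing c/p order is 1-optimal and querying in nondecreasing c/(1−p) order is 0-optimal for k-of-n functions. -/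
open Finset

/-- Total cost of the shortest prefix of `l` containing at least `m` indices
selected by `sel`. -/
noncomputable def stopCost {n : ℕ} (c : Fin n → ℝ) (sel : Fin n → Bool) (m : ℕ)
    (l : List (Fin n)) : ℝ :=
  ((l.take (sInf {k | m ≤ ((l.take k).filter sel).length})).map c).sum

/-!
The cost of a strategy is compared with its cost truncated at the moment the `m`-th queried
index with `a i = true` is seen; on the event that at least `m` such indices remain, this is at
most its true cost. For the sequential strategy along a list sorted by `c / p`, swapping two
adjacent queries `i, j` changes the truncated expected cost by `c i * p j - c j * p i` when
`m = 1` and not at all when `m ≥ 2`, so bringing any index to the front never lowers it. By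
induction on the tree, conditioning on the root query `i` splits both the tree and the
sequential strategy started at `i` into `c i` plus the costs for thresholds `m - 1` (if
`a i = true`) and `m` (if `a i = false`) on the remaining indices. The `0`-side is the `1`-side
for the complemented assignment, the probabilities `1 - p`, the threshold `n - k + 1` and the
mirrored tree.
-/

open Function

section Lists

variable {α : Type*}

noncomputable def costUntil (c : α → ℝ) (a : α → Bool) : ℕ → List α → ℝ
  | 0, _ => 0
  | _ + 1, [] => 0
  | m + 1, i :: l => c i + costUntil c a (if a i then m else m + 1) l

noncomputable def threshold (l : List α) (m : ℕ) (a : α → Bool) : ℝ :=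
  if m ≤ l.countP a then 1 else 0

variable (c : α → ℝ) (a : α → Bool)

@[simp] lemma costUntil_zero (l : List α) : costUntil c a 0 l = 0 := by
  cases l <;> rfl

@[simp] lemma costUntil_nil (m : ℕ) : costUntil c a m [] = 0 := by
  cases m <;> rfl

@[simp] lemma costUntil_cons_succ (i : α) (l : List α) (m : ℕ) :
    costUntil c a (m + 1) (i :: l) = c i + costUntil c a (if a i then m else m + 1) l :=
  rfl

lemma costUntil_congr {a a' : α → Bool} {l : List α} (h : ∀ j ∈ l, a j = a' j) (m : ℕ) :
    costUntil c a m l = costUntil c a' m l := by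
  induction l generalizing m with
  | nil => simp
  | cons i l ih =>
    cases m with
    | zero => simp
    | succ m =>
      simp only [costUntil_cons_succ, h i List.mem_cons_self,
        ih fun j hj => h j (List.mem_cons_of_mem i hj)]

lemma costUntil_le_sum (hc : ∀ i, 0 ≤ c i) (m : ℕ) (l : List α) :
    costUntil c a m l ≤ (l.map c).sum := by
  induction l generalizing m with
  | nil => simp
  | cons i l ih =>
    cases m with
    | zero => exact List.sum_nonneg (by simpa using ⟨hc i, fun j _ => hc j⟩)
    | succ m => simpa using ih _

@[simp] lemma threshold_zero (l : List α) : threshold l 0 a = 1 := by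
  simp [threshold]

lemma threshold_cons_succ (i : α) (l : List α) (m : ℕ) :
    threshold (i :: l) (m + 1) a = if a i then threshold l m a else threshold l (m + 1) a := by
  cases h : a i <;> simp [threshold, h]

lemma threshold_perm {l l' : List α} (h : l.Perm l') (m : ℕ) :
    threshold l m = threshold l' m := by
  ext a
  simp [threshold, h.countP_eq]

variable [DecidableEq α]

lemma countP_update_of_not_mem {l : List α} {i : α} (hi : i ∉ l) (b : Bool) :
    l.countP (update a i b) = l.countP a :=
  List.countP_congr fun j hj => by rw [update_of_ne (ne_of_mem_of_not_mem hj hi)]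

lemma countP_update_of_perm {l l' : List α} {i : α} (hl : l.Perm (i :: l')) (hi : i ∉ l')
    (b : Bool) : l.countP (update a i b) = l'.countP a + if b then 1 else 0 := by
  rw [hl.countP_eq, List.countP_cons, update_self, countP_update_of_not_mem a hi]

lemma threshold_update {l : List α} {i : α} (hi : i ∉ l) (m : ℕ) (b : Bool) :
    threshold l m (update a i b) = threshold l m a := by
  rw [threshold, countP_update_of_not_mem a hi, threshold]

end Lists

lemma sum_eq_sum_filter_add_update {ι M : Type*} [DecidableEq ι] [Fintype ι] [AddCommMonoid M]
    (i : ι) (G : (ι → Bool) → M) :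
    ∑ a, G a = ∑ a with a i = true, (G a + G (update a i false)) := by
  rw [sum_add_distrib, ← sum_filter_add_sum_filter_not univ fun a => a i = true]
  congr 1
  refine sum_nbij' (fun a => update a i true) (fun a => update a i false) ?_ ?_ ?_ ?_ ?_ <;>
    intro a ha <;> simp only [mem_filter, mem_univ, true_and, Bool.not_eq_true] at ha <;>
    simp [update_idem, ← ha]

section Probability

variable {n : ℕ} (p : Fin n → ℝ)

lemma pr_eq_mul_prod_erase (i : Fin n) (a : Fin n → Bool) :
    pr p a
      = (if a i then p i else 1 - p i) * ∏ j ∈ univ.erase i, if a j then p j else 1 - p j :=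
  (mul_prod_erase univ _ (mem_univ i)).symm

lemma pr_update (a : Fin n → Bool) (i : Fin n) (b : Bool) :
    pr p (update a i b)
      = (if b then p i else 1 - p i) * ∏ j ∈ univ.erase i, if a j then p j else 1 - p j := by
  rw [pr_eq_mul_prod_erase p i, update_self]
  congr 1
  exact prod_congr rfl fun j hj => by rw [update_of_ne (ne_of_mem_erase hj)]

lemma pr_nonneg (hp₀ : ∀ i, 0 ≤ p i) (hp₁ : ∀ i, p i ≤ 1) (a : Fin n → Bool) :
    0 ≤ pr p a :=
  prod_nonneg fun i _ => by split <;> linarith [hp₀ i, hp₁ i]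

lemma sum_pr : ∑ a, pr p a = 1 := by
  simp only [pr]
  rw [← Fintype.prod_sum fun i (b : Bool) => if b then p i else 1 - p i]
  simp

lemma pr_compl (b : Fin n → Bool) : pr (fun i => 1 - p i) b = pr p fun i => !b i :=
  prod_congr rfl fun i _ => by cases h : b i <;> simp [h]

noncomputable def expectation (g : (Fin n → Bool) → ℝ) : ℝ :=
  ∑ a, g a * pr p a

lemma expectation_mul_add (f g : (Fin n → Bool) → ℝ) (x : ℝ) :
    expectation p (fun a => f a * (x + g a))
      = x * expectation p f + expectation p fun a => f a * g a := by
  simp only [expectation, mul_sum, ← sum_add_distrib]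
  exact sum_congr rfl fun a _ => by ring

lemma expectation_ite_of_indep (i : Fin n) {g₁ g₀ : (Fin n → Bool) → ℝ}
    (h₁ : ∀ a b, g₁ (update a i b) = g₁ a) (h₀ : ∀ a b, g₀ (update a i b) = g₀ a) :
    expectation p (fun a => if a i then g₁ a else g₀ a)
      = p i * expectation p g₁ + (1 - p i) * expectation p g₀ := by
  simp only [expectation]
  rw [sum_eq_sum_filter_add_update i, sum_eq_sum_filter_add_update i fun a => g₁ a * pr p a,
    sum_eq_sum_filter_add_update i fun a => g₀ a * pr p a, mul_sum, mul_sum, ← sum_add_distrib]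
  refine sum_congr rfl fun a ha => ?_
  have hai : a i = true := (mem_filter.1 ha).2
  rw [h₁, h₀, pr_update, pr_eq_mul_prod_erase p i a, update_self, hai]
  simp only [if_true, Bool.false_eq_true, if_false]
  ring

end Probability

section ExpectedCost

variable {n : ℕ} (p c : Fin n → ℝ)

/-- A query strategy is modelled by the sequence `Q a` of indices it queries on `a`. -/
noncomputable def expectedCost (l : List (Fin n)) (m : ℕ)
    (Q : (Fin n → Bool) → List (Fin n)) : ℝ :=
  expectation p fun a => threshold l m a * costUntil c a m (Q a)

noncomputable def seqCost (l : List (Fin n)) (m : ℕ) : ℝ :=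
  expectedCost p c l m fun _ => l

@[simp] lemma expectedCost_zero (l : List (Fin n)) (Q : (Fin n → Bool) → List (Fin n)) :
    expectedCost p c l 0 Q = 0 := by
  simp [expectedCost, expectation]

lemma expectedCost_perm {l l' : List (Fin n)} (h : l.Perm l') (m : ℕ)
    (Q : (Fin n → Bool) → List (Fin n)) : expectedCost p c l m Q = expectedCost p c l' m Q := by
  rw [expectedCost, threshold_perm h, expectedCost]

lemma expectation_threshold_cons_succ {i : Fin n} {l : List (Fin n)} (hi : i ∉ l) (m : ℕ) :
    expectation p (threshold (i :: l) (m + 1))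
      = p i * expectation p (threshold l m) + (1 - p i) * expectation p (threshold l (m + 1)) := by
  simp only [funext (threshold_cons_succ · i l m)]
  exact expectation_ite_of_indep p i (threshold_update · hi m) (threshold_update · hi (m + 1))

lemma expectation_threshold_zero (l : List (Fin n)) : expectation p (threshold l 0) = 1 := by
  simp [expectation, sum_pr]

lemma expectedCost_cons_succ {i : Fin n} {l : List (Fin n)} (hi : i ∉ l)
    {Q₀ Q₁ : (Fin n → Bool) → List (Fin n)}
    (hQ₀ : ∀ a b, Q₀ (update a i b) = Q₀ a) (hQ₁ : ∀ a b, Q₁ (update a i b) = Q₁ a)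
    (hi₀ : ∀ a, i ∉ Q₀ a) (hi₁ : ∀ a, i ∉ Q₁ a) (m : ℕ) :
    expectedCost p c (i :: l) (m + 1) (fun a => i :: if a i then Q₁ a else Q₀ a)
      = p i * (c i * expectation p (threshold l m) + expectedCost p c l m Q₁)
        + (1 - p i)
          * (c i * expectation p (threshold l (m + 1)) + expectedCost p c l (m + 1) Q₀) := by
  have indep : ∀ (Q : (Fin n → Bool) → List (Fin n)), (∀ a b, Q (update a i b) = Q a) →
      (∀ a, i ∉ Q a) → ∀ m' a b,
        threshold l m' (update a i b) * (c i + costUntil c (update a i b) m' (Q (update a i b)))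
          = threshold l m' a * (c i + costUntil c a m' (Q a)) := fun Q hQ hiQ m' a b => by
    rw [threshold_update _ hi, hQ, costUntil_congr c fun j hj =>
      update_of_ne (ne_of_mem_of_not_mem hj (hiQ a)) _ _]
  have branch : ∀ a, threshold (i :: l) (m + 1) a
        * costUntil c a (m + 1) (i :: if a i then Q₁ a else Q₀ a)
      = if a i then threshold l m a * (c i + costUntil c a m (Q₁ a))
        else threshold l (m + 1) a * (c i + costUntil c a (m + 1) (Q₀ a)) := fun a => by
    cases h : a i <;> simp [threshold_cons_succ, h]
  rw [expectedCost, funext branch,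
    expectation_ite_of_indep p i (indep Q₁ hQ₁ hi₁ m) (indep Q₀ hQ₀ hi₀ (m + 1)),
    expectation_mul_add, expectation_mul_add, expectedCost, expectedCost]

lemma seqCost_cons_succ {i : Fin n} {l : List (Fin n)} (hi : i ∉ l) (m : ℕ) :
    seqCost p c (i :: l) (m + 1)
      = p i * (c i * expectation p (threshold l m) + seqCost p c l m)
        + (1 - p i) * (c i * expectation p (threshold l (m + 1)) + seqCost p c l (m + 1)) := by
  simpa only [seqCost, ite_self] using
    expectedCost_cons_succ p c hi (Q₀ := fun _ => l) (Q₁ := fun _ => l) (fun _ _ => rfl)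
      (fun _ _ => rfl) (fun _ => hi) (fun _ => hi) m

lemma seqCost_swap {i j : Fin n} {r : List (Fin n)} (hij : i ≠ j) (hi : i ∉ r) (hj : j ∉ r)
    (hle : c i * p j ≤ c j * p i) (m : ℕ) :
    seqCost p c (i :: j :: r) m ≤ seqCost p c (j :: i :: r) m := by
  have hijr : i ∉ j :: r := by simp [hij, hi]
  have hjir : j ∉ i :: r := by simp [hij.symm, hj]
  match m with
  | 0 => simp [seqCost]
  | 1 =>
    simp only [seqCost_cons_succ p c hijr, seqCost_cons_succ p c hjir, seqCost_cons_succ p c hi,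
      seqCost_cons_succ p c hj, expectation_threshold_cons_succ p hi,
      expectation_threshold_cons_succ p hj, expectation_threshold_zero]
    simp only [seqCost, expectedCost_zero]
    linarith
  | m + 2 =>
    simp only [seqCost_cons_succ p c hijr, seqCost_cons_succ p c hjir, seqCost_cons_succ p c hi,
      seqCost_cons_succ p c hj, expectation_threshold_cons_succ p hi,
      expectation_threshold_cons_succ p hj]
    exact le_of_eq (by ring)

end ExpectedCost

lemma seqCost_le_seqCost_cons_erase {n : ℕ} {p c : Fin n → ℝ} (hp₀ : ∀ i, 0 < p i)
    (hp₁ : ∀ i, p i ≤ 1) {l : List (Fin n)} (hnd : l.Nodup)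
    (hs : l.Pairwise fun i j => c i / p i ≤ c j / p j) {i : Fin n} (hi : i ∈ l) (m : ℕ) :
    seqCost p c l m ≤ seqCost p c (i :: l.erase i) m := by
  induction l generalizing m with
  | nil => simp at hi
  | cons j l ih =>
    obtain ⟨hjl, hnd⟩ := List.nodup_cons.mp hnd
    obtain ⟨hj, hs⟩ := List.pairwise_cons.mp hs
    rcases List.mem_cons.mp hi with rfl | hil
    · simp
    have hij : i ≠ j := ne_of_mem_of_not_mem hil hjl
    have hie : i ∉ l.erase i := hnd.not_mem_erase
    have hje : j ∉ l.erase i := fun h => hjl (List.mem_of_mem_erase h)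
    have hperm : l.Perm (i :: l.erase i) := List.perm_cons_erase hil
    cases m with
    | zero => simp [seqCost]
    | succ m =>
      rw [List.erase_cons_tail (by simpa using hij.symm)]
      calc seqCost p c (j :: l) (m + 1) ≤ seqCost p c (j :: i :: l.erase i) (m + 1) := by
            rw [seqCost_cons_succ p c hjl, seqCost_cons_succ p c (by simp [hij.symm, hje]),
              threshold_perm hperm, threshold_perm hperm]
            gcongr
            · exact (hp₀ j).le
            · exact ih hnd hs hil m
            · exact sub_nonneg.2 (hp₁ j)
            · exact ih hnd hs hil (m + 1)
        _ ≤ seqCost p c (i :: j :: l.erase i) (m + 1) :=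
            seqCost_swap p c hij.symm hje hie
              ((div_le_div_iff₀ (hp₀ j) (hp₀ i)).mp (hj i hil)) (m + 1)

namespace DTree

variable {n : ℕ}

lemma path_update_of_proper {T : DTree n} {u : Finset (Fin n)} (hT : T.Proper u) {i : Fin n}
    (hi : i ∈ u) (a : Fin n → Bool) (b : Bool) : T.path (update a i b) = T.path a := by
  induction T generalizing u with
  | leaf => rfl
  | node j t₀ t₁ ih₀ ih₁ =>
    obtain ⟨hju, h₀, h₁⟩ := hT
    simp only [path, update_of_ne (ne_of_mem_of_not_mem hi hju).symm,
      ih₀ h₀ (mem_insert_of_mem hi), ih₁ h₁ (mem_insert_of_mem hi)]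

lemma eval_update_of_proper {T : DTree n} {u : Finset (Fin n)} (hT : T.Proper u) {i : Fin n}
    (hi : i ∈ u) (a : Fin n → Bool) (b : Bool) : T.eval (update a i b) = T.eval a := by
  induction T generalizing u with
  | leaf => rfl
  | node j t₀ t₁ ih₀ ih₁ =>
    obtain ⟨hju, h₀, h₁⟩ := hT
    simp only [eval, update_of_ne (ne_of_mem_of_not_mem hi hju).symm,
      ih₀ h₀ (mem_insert_of_mem hi), ih₁ h₁ (mem_insert_of_mem hi)]

lemma not_mem_path_of_proper {T : DTree n} {u : Finset (Fin n)} (hT : T.Proper u) {i : Fin n}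
    (hi : i ∈ u) (a : Fin n → Bool) : i ∉ T.path a := by
  induction T generalizing u with
  | leaf => simp [path]
  | node j t₀ t₁ ih₀ ih₁ =>
    obtain ⟨hju, h₀, h₁⟩ := hT
    simp only [path, List.mem_cons, not_or]
    refine ⟨(ne_of_mem_of_not_mem hi hju), ?_⟩
    split
    · exact ih₁ h₁ (mem_insert_of_mem hi)
    · exact ih₀ h₀ (mem_insert_of_mem hi)

lemma cost_eq_sum_path (c : Fin n → ℝ) (T : DTree n) (a : Fin n → Bool) :
    T.cost c a = ((T.path a).map c).sum := by
  induction T with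
  | leaf => rfl
  | node i t₀ t₁ ih₀ ih₁ => cases h : a i <;> simp [cost, path, h, ih₀, ih₁]

def Decides (T : DTree n) (E : (Fin n → Bool) → Prop) : Prop :=
  ∀ a a', T.eval a = T.eval a' → (E a ↔ E a')

lemma Decides.congr {T : DTree n} {E E' : (Fin n → Bool) → Prop} (h : T.Decides E)
    (hE : ∀ a, E a ↔ E' a) : T.Decides E' :=
  fun a a' he => by rw [← hE, ← hE]; exact h a a' he

lemma Decides.not {T : DTree n} {E : (Fin n → Bool) → Prop} (h : T.Decides E) :
    T.Decides fun a => ¬ E a :=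
  fun a a' he => not_congr (h a a' he)

lemma Decides.of_node {i : Fin n} {t₀ t₁ : DTree n} {E : (Fin n → Bool) → Prop}
    (h : (node i t₀ t₁).Decides E) {u : Finset (Fin n)} (hi : i ∈ u) (b : Bool)
    (ht : (if b then t₁ else t₀).Proper u) :
    (if b then t₁ else t₀).Decides fun a => E (update a i b) := by
  intro a a' he
  refine h _ _ ?_
  cases b <;> simp only [Bool.false_eq_true, if_false, if_true] at ht he <;>
    simpa [eval, eval_update_of_proper ht hi] using he

def mirror : DTree n → DTree n
  | leaf v => leaf v
  | node i t₀ t₁ => node i (mirror t₁) (mirror t₀)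

lemma Proper.mirror {T : DTree n} {u : Finset (Fin n)} (h : T.Proper u) : T.mirror.Proper u := by
  induction T generalizing u with
  | leaf => trivial
  | node i t₀ t₁ ih₀ ih₁ => exact ⟨h.1, ih₁ h.2.2, ih₀ h.2.1⟩

lemma eval_mirror (T : DTree n) (a : Fin n → Bool) : T.mirror.eval a = T.eval fun i => !a i := by
  induction T with
  | leaf => rfl
  | node i t₀ t₁ ih₀ ih₁ => cases h : a i <;> simp [mirror, eval, h, ih₀, ih₁]

lemma cost_mirror (c : Fin n → ℝ) (T : DTree n) (a : Fin n → Bool) :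
    T.mirror.cost c a = T.cost c fun i => !a i := by
  induction T with
  | leaf => rfl
  | node i t₀ t₁ ih₀ ih₁ => cases h : a i <;> simp [mirror, cost, h, ih₀, ih₁]

lemma Decides.mirror {T : DTree n} {E : (Fin n → Bool) → Prop} (h : T.Decides E) :
    T.mirror.Decides fun a => E fun i => !a i :=
  fun a a' he => h _ _ (by rwa [eval_mirror, eval_mirror] at he)

end DTree

theorem seqCost_le_expectedCost_path {n : ℕ} {p c : Fin n → ℝ} (hp₀ : ∀ i, 0 < p i)
    (hp₁ : ∀ i, p i ≤ 1) (T : DTree n) {used : Finset (Fin n)} {l : List (Fin n)} {m : ℕ}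
    (hT : T.Proper used) (hl : ∀ x, x ∈ l ↔ x ∉ used) (hnd : l.Nodup)
    (hs : l.Pairwise fun i j => c i / p i ≤ c j / p j)
    (hE : T.Decides fun a => m ≤ l.countP a) :
    seqCost p c l m ≤ expectedCost p c l m T.path := by
  induction T generalizing used l m with
  | leaf v =>
    cases m with
    | zero => simp [seqCost]
    | succ m =>
      have hfail : ∀ a, threshold l (m + 1) a = 0 := fun a => by
        simp [threshold, hE a (fun _ => false) rfl]
      simp [seqCost, expectedCost, expectation, hfail]
  | node i t₀ t₁ ih₀ ih₁ =>
    obtain ⟨hiu, hT₀, hT₁⟩ := hT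
    cases m with
    | zero => simp [seqCost]
    | succ m =>
    have hil : i ∈ l := (hl i).2 hiu
    have hperm := List.perm_cons_erase hil
    have hi' : i ∉ l.erase i := hnd.not_mem_erase
    have hl' : ∀ x, x ∈ l.erase i ↔ x ∉ insert i used := fun x => by
      rw [hnd.mem_erase_iff, hl, mem_insert]
      tauto
    have hE₁ : t₁.Decides fun a => m ≤ (l.erase i).countP a :=
      (hE.of_node (mem_insert_self i used) true hT₁).congr fun a => by
        simp [countP_update_of_perm a hperm hi']
    have hE₀ : t₀.Decides fun a => m + 1 ≤ (l.erase i).countP a :=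
      (hE.of_node (mem_insert_self i used) false hT₀).congr fun a => by
        simp [countP_update_of_perm a hperm hi']
    have hpath :
        (DTree.node i t₀ t₁).path = fun a => i :: if a i then t₁.path a else t₀.path a :=
      rfl
    calc seqCost p c l (m + 1) ≤ seqCost p c (i :: l.erase i) (m + 1) :=
          seqCost_le_seqCost_cons_erase hp₀ hp₁ hnd hs hil _
      _ ≤ expectedCost p c (i :: l.erase i) (m + 1) (DTree.node i t₀ t₁).path := by
          rw [seqCost_cons_succ p c hi', hpath, expectedCost_cons_succ p c hi'
            (DTree.path_update_of_proper hT₀ (mem_insert_self i used))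
            (DTree.path_update_of_proper hT₁ (mem_insert_self i used))
            (DTree.not_mem_path_of_proper hT₀ (mem_insert_self i used))
            (DTree.not_mem_path_of_proper hT₁ (mem_insert_self i used))]
          gcongr
          · exact (hp₀ i).le
          · exact ih₁ hT₁ hl' (hnd.erase i) (hs.sublist List.erase_sublist) hE₁
          · exact sub_nonneg.2 (hp₁ i)
          · exact ih₀ hT₀ hl' (hnd.erase i) (hs.sublist List.erase_sublist) hE₀
      _ = expectedCost p c l (m + 1) (DTree.node i t₀ t₁).path :=
          expectedCost_perm p c hperm.symm _ _

section StopCost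

variable {n : ℕ} (c : Fin n → ℝ) (sel : Fin n → Bool)

lemma stopCost_zero (l : List (Fin n)) : stopCost c sel 0 l = 0 := by
  simp [stopCost]

lemma stopCost_cons_succ {i : Fin n} {l : List (Fin n)} {m : ℕ}
    (h : m + 1 ≤ (i :: l).countP sel) :
    stopCost c sel (m + 1) (i :: l) = c i + stopCost c sel (if sel i then m else m + 1) l := by
  set P : ℕ → Prop := fun k => m + 1 ≤ (((i :: l).take k).filter sel).length
  have hP : ∀ k, P (k + 1) ↔ (if sel i then m else m + 1) ≤ ((l.take k).filter sel).length :=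
    fun k => by cases h : sel i <;> simp [P, h]
  have hpos : 1 ≤ sInf {k | P k} := by
    refine Nat.one_le_iff_ne_zero.2 fun h0 => ?_
    rcases Nat.sInf_eq_zero.1 h0 with h0 | h0
    · simp [P] at h0
    · exact (Set.eq_empty_iff_forall_notMem.1 h0) (i :: l).length
        (by simpa [P, List.countP_eq_length_filter] using h)
  have hshift := Nat.sInf_add hpos
  simp only [hP] at hshift
  rw [stopCost, ← hshift, List.take_succ_cons, List.map_cons, List.sum_cons, stopCost]

lemma stopCost_eq_costUntil {l : List (Fin n)} {m : ℕ} (h : m ≤ l.countP sel) :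
    stopCost c sel m l = costUntil c sel m l := by
  induction l generalizing m with
  | nil => simp_all [stopCost_zero]
  | cons i l ih =>
    cases m with
    | zero => simp [stopCost_zero]
    | succ m =>
      rw [stopCost_cons_succ c sel h, costUntil_cons_succ, ih]
      cases hi : sel i <;> simp_all

end StopCost

lemma countP_eq_N1 {n : ℕ} {l : List (Fin n)} (hnd : l.Nodup) (hl : ∀ x, x ∈ l)
    (a : Fin n → Bool) : l.countP a = N1 a := by
  rw [N1, List.countP_eq_length_filter, ← List.toFinset_card_of_nodup (hnd.filter a),
    List.toFinset_filter]
  congr 1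
  ext x
  simp [hl]

lemma N1_add_N1_compl {n : ℕ} (a : Fin n → Bool) : N1 a + N1 (fun i => !a i) = n := by
  simpa [N1] using card_filter_add_card_filter_not (s := univ) fun i => a i = true

lemma sum_filter_mul_pr_compl {n : ℕ} (p : Fin n → ℝ) {E E' : (Fin n → Bool) → Prop}
    [DecidablePred E] [DecidablePred E'] (hE : ∀ b, E (fun i => !b i) ↔ E' b)
    (g : (Fin n → Bool) → ℝ) :
    ∑ a with E a, g a * pr p a
      = ∑ b with E' b, g (fun i => !b i) * pr (fun i => 1 - p i) b := by
  refine sum_nbij' (fun a i => !a i) (fun b i => !b i) ?_ ?_ ?_ ?_ ?_ <;>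
    simp [pr_compl, ← hE]

theorem sum_stopCost_le_sum_cost {n : ℕ} {p c : Fin n → ℝ} (hp₀ : ∀ i, 0 < p i)
    (hp₁ : ∀ i, p i ≤ 1) (hc : ∀ i, 0 ≤ c i) {l : List (Fin n)} (hnd : l.Nodup)
    (hl : ∀ x, x ∈ l) (hs : l.Pairwise fun i j => c i / p i ≤ c j / p j) {T : DTree n}
    (hT : T.Proper ∅) {k : ℕ} (hE : T.Decides fun a => k ≤ N1 a) :
    ∑ a with k ≤ N1 a, stopCost c a k l * pr p a
      ≤ ∑ a with k ≤ N1 a, T.cost c a * pr p a := by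
  have hN := countP_eq_N1 hnd hl
  have hsum : ∀ Q : (Fin n → Bool) → List (Fin n),
      expectedCost p c l k Q = ∑ a with k ≤ N1 a, costUntil c a k (Q a) * pr p a := fun Q => by
    simp only [expectedCost, expectation, threshold, hN, sum_filter, ite_mul, one_mul, zero_mul]
  calc ∑ a with k ≤ N1 a, stopCost c a k l * pr p a = seqCost p c l k := by
        rw [seqCost, hsum]
        exact sum_congr rfl fun a ha => by
          rw [stopCost_eq_costUntil c a ((hN a).symm ▸ (mem_filter.1 ha).2)]
    _ ≤ expectedCost p c l k T.path :=
        seqCost_le_expectedCost_path hp₀ hp₁ T hT (by simpa using hl) hnd hs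
          (hE.congr fun a => by rw [hN])
    _ ≤ ∑ a with k ≤ N1 a, T.cost c a * pr p a := by
        rw [hsum]
        gcongr with a
        · exact pr_nonneg p (fun i => (hp₀ i).le) hp₁ a
        · rw [T.cost_eq_sum_path]
          exact costUntil_le_sum c a hc k _

theorem stmt18_general {n : ℕ} (p c : Fin n → ℝ)
    (hp : ∀ i, 0 < p i ∧ p i < 1) (hc : ∀ i, 0 < c i)
    (k : ℕ) (hkn : k ≤ n)
    (σ σ' : Equiv.Perm (Fin n))
    (hσ : (List.ofFn (fun t => σ t)).Pairwise
      (fun i j => c i / p i ≤ c j / p j))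
    (hσ' : (List.ofFn (fun t => σ' t)).Pairwise
      (fun i j => c i / (1 - p i) ≤ c j / (1 - p j)))
    (T : DTree n) (hTp : T.Proper ∅)
    (hTe : ∀ a, T.eval a = if k ≤ N1 a then 1 else 0) :
    (∑ a ∈ Finset.univ.filter (fun a : Fin n → Bool => k ≤ N1 a),
        stopCost c a k (List.ofFn (fun t => σ t)) * pr p a
      ≤ ∑ a ∈ Finset.univ.filter (fun a : Fin n → Bool => k ≤ N1 a),
          T.cost c a * pr p a) ∧
    (∑ a ∈ Finset.univ.filter (fun a : Fin n → Bool => ¬ k ≤ N1 a),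
        stopCost c (fun i => !a i) (n - k + 1) (List.ofFn (fun t => σ' t)) * pr p a
      ≤ ∑ a ∈ Finset.univ.filter (fun a : Fin n → Bool => ¬ k ≤ N1 a),
          T.cost c a * pr p a) := by
  have hE : T.Decides fun a => k ≤ N1 a := fun a a' h => by
    rw [hTe, hTe] at h
    by_cases ha : k ≤ N1 a <;> by_cases ha' : k ≤ N1 a' <;> simp [ha, ha'] at h ⊢
  have hmem (τ : Equiv.Perm (Fin n)) (x : Fin n) : x ∈ List.ofFn fun t => τ t :=
    List.mem_ofFn.2 ⟨τ.symm x, τ.apply_symm_apply x⟩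
  refine ⟨sum_stopCost_le_sum_cost (fun i => (hp i).1) (fun i => (hp i).2.le) (fun i => (hc i).le)
    (List.nodup_ofFn.2 σ.injective) (hmem σ) hσ hTp hE, ?_⟩
  have hflip (b : Fin n → Bool) : (¬ k ≤ N1 fun i => !b i) ↔ n - k + 1 ≤ N1 b := by
    have := N1_add_N1_compl b
    omega
  rw [sum_filter_mul_pr_compl p hflip, sum_filter_mul_pr_compl p hflip]
  simpa only [Bool.not_not, ← DTree.cost_mirror] using
    sum_stopCost_le_sum_cost (p := fun i => 1 - p i) (fun i => sub_pos.2 (hp i).2)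
      (fun i => sub_le_self 1 (hp i).1.le) (fun i => (hc i).le) (List.nodup_ofFn.2 σ'.injective)
      (hmem σ') hσ' hTp.mirror (hE.mirror.not.congr hflip)

theorem stmt18 {n : ℕ} (hn : 1 ≤ n) (p c : Fin n → ℝ)
    (hp : ∀ i, 0 < p i ∧ p i < 1) (hc : ∀ i, 0 < c i)
    (k : ℕ) (hk1 : 1 ≤ k) (hkn : k ≤ n)
    (σ σ' : Equiv.Perm (Fin n))
    (hσ : (List.ofFn (fun t => σ t)).Pairwise
      (fun i j => c i / p i ≤ c j / p j))
    (hσ' : (List.ofFn (fun t => σ' t)).Pairwise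
      (fun i j => c i / (1 - p i) ≤ c j / (1 - p j)))
    (T : DTree n) (hTp : T.Proper ∅)
    (hTe : ∀ a, T.eval a = if k ≤ N1 a then 1 else 0) :
    (∑ a ∈ Finset.univ.filter (fun a : Fin n → Bool => k ≤ N1 a),
        stopCost c a k (List.ofFn (fun t => σ t)) * pr p a
      ≤ ∑ a ∈ Finset.univ.filter (fun a : Fin n → Bool => k ≤ N1 a),
          T.cost c a * pr p a) ∧
    (∑ a ∈ Finset.univ.filter (fun a : Fin n → Bool => ¬ k ≤ N1 a),
        stopCost c (fun i => !a i) (n - k + 1) (List.ofFn (fun t => σ' t)) * pr p a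
      ≤ ∑ a ∈ Finset.univ.filter (fun a : Fin n → Bool => ¬ k ≤ N1 a),
          T.cost c a * pr p a) :=
  stmt18_general p c hp hc k hkn σ σ' hσ hσ' T hTp hTe
end

section
/- For arbitrary positive costs c, let 1 ≤ k ≤ n and let f_k be the k-of-n function, f_k(a) = 1 iff N₁(a) ≥ k. Then OPT(f_k) = V(f_k): the minimum expected evaluation cost of f_k over all decision trees equals its optimal expected verification cost, i.e., the sum of the minimum 1-cost and the minimum 0-cost over decision trees evaluating f_k. -/
open Finset

/-!
For `b : Bool`, the `b`-cost of a tree is its expected cost on the event that the value is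
certified by `b`'s: at least `k` ones for the value `1`, at least `n + 1 - k` zeros for the
value `0`. On such an event an exchange argument shows that no tree beats the greedy strategy
that queries coordinates in increasing order of `c i / Pr[a i = b]`: swapping two consecutive
queries changes nothing while at least two more `b`'s are needed, and favours the smaller ratio
when one is needed. The same argument shows that any of the first `κ` coordinates in that order
can be queried first at no loss, `κ` being the number of `b`'s still needed. The first `k`
coordinates in the order for `1` and the first `n + 1 - k` in the order for `0` must
intersect, so some coordinate is a good first query for both values; recursing on the residual
threshold function gives a single tree attaining both the minimum `1`-cost and the minimum
`0`-cost.
-/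

namespace KOfN

open Function (update update_of_ne update_self)
open DTree

variable {n : ℕ}

noncomputable def bitProb (p : Fin n → ℝ) (b : Bool) (i : Fin n) : ℝ :=
  if b then p i else 1 - p i

lemma bitProb_not (p : Fin n → ℝ) (b : Bool) (i : Fin n) :
    bitProb p (!b) i = 1 - bitProb p b i := by
  cases b <;> simp [bitProb]

lemma bitProb_add_bitProb_not (p : Fin n → ℝ) (b : Bool) (i : Fin n) :
    bitProb p b i + bitProb p (!b) i = 1 := by
  rw [bitProb_not]; ring

lemma bitProb_pos {p : Fin n → ℝ} (hp : ∀ i, 0 < p i ∧ p i < 1) (b : Bool) (i : Fin n) :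
    0 < bitProb p b i := by
  cases b
  · simpa [bitProb] using (hp i).2
  · exact (hp i).1

lemma bitProb_lt_one {p : Fin n → ℝ} (hp : ∀ i, 0 < p i ∧ p i < 1) (b : Bool) (i : Fin n) :
    bitProb p b i < 1 := by
  linarith [bitProb_add_bitProb_not p b i, bitProb_pos hp (!b) i]

lemma pr_eq_bitProb_mul (p : Fin n → ℝ) (a : Fin n → Bool) (i : Fin n) :
    pr p a = bitProb p (a i) i * ∏ j ∈ univ.erase i, bitProb p (a j) j :=
  (mul_prod_erase univ (fun j => bitProb p (a j) j) (mem_univ i)).symm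

lemma pr_nonneg {p : Fin n → ℝ} (hp : ∀ i, 0 < p i ∧ p i < 1) (a : Fin n → Bool) :
    0 ≤ pr p a :=
  prod_nonneg fun i _ => (bitProb_pos hp (a i) i).le

lemma sum_pr (p : Fin n → ℝ) : ∑ a, pr p a = 1 := by
  simp only [pr, ← Fintype.prod_sum (fun i (b : Bool) => if b then p i else 1 - p i)]
  simp

noncomputable def expOn (p : Fin n → ℝ) (s : Finset (Fin n → Bool))
    (f : (Fin n → Bool) → ℝ) : ℝ :=
  ∑ a ∈ s, f a * pr p a

lemma expOn_nonneg {p : Fin n → ℝ} (hp : ∀ i, 0 < p i ∧ p i < 1) {s : Finset (Fin n → Bool)}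
    {f : (Fin n → Bool) → ℝ} (hf : ∀ a, 0 ≤ f a) : 0 ≤ expOn p s f :=
  sum_nonneg fun a _ => mul_nonneg (hf a) (pr_nonneg hp a)

lemma expOn_add (p : Fin n → ℝ) (s : Finset (Fin n → Bool)) (f g : (Fin n → Bool) → ℝ) :
    expOn p s (f + g) = expOn p s f + expOn p s g := by
  simp only [expOn, Pi.add_apply, add_mul, sum_add_distrib]

lemma expOn_const (p : Fin n → ℝ) (s : Finset (Fin n → Bool)) (x : ℝ) :
    expOn p s (fun _ => x) = x * expOn p s 1 := by
  simp only [expOn, mul_sum, Pi.one_apply, one_mul]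

lemma expOn_filter_add_filter_not (p : Fin n → ℝ) (s : Finset (Fin n → Bool)) (i : Fin n)
    (b : Bool) (f : (Fin n → Bool) → ℝ) :
    expOn p (s.filter (· i = b)) f + expOn p (s.filter (· i = !b)) f = expOn p s f := by
  simp only [expOn, ← Bool.not_eq_eq_eq_not, Bool.not_eq, sum_filter_add_sum_filter_not]

lemma expOn_filter_apply_eq {p : Fin n → ℝ} {s : Finset (Fin n → Bool)} {i : Fin n}
    {f : (Fin n → Bool) → ℝ} (hs : ∀ a v, update a i v ∈ s ↔ a ∈ s)
    (hf : ∀ a v, f (update a i v) = f a) (b : Bool) :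
    expOn p (s.filter (· i = b)) f = bitProb p b i * expOn p s f := by
  set rest : Bool → ℝ := fun v =>
    ∑ a ∈ s.filter (· i = v), f a * ∏ j ∈ univ.erase i, bitProb p (a j) j
  have h_cond : ∀ v, expOn p (s.filter (· i = v)) f = bitProb p v i * rest v := by
    intro v
    simp only [expOn, rest, mul_sum]
    refine sum_congr rfl fun a ha => ?_
    rw [pr_eq_bitProb_mul p a i, (mem_filter.1 ha).2]
    ring
  have h_rest : ∀ v, rest v = rest b := by
    intro v
    refine sum_bij' (fun a _ => update a i b) (fun a _ => update a i v) ?_ ?_ ?_ ?_ ?_ <;>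
      intro a ha <;> rw [mem_filter] at ha
    · simp [hs, ha.1]
    · simp [hs, ha.1]
    · simp [← ha.2]
    · simp [← ha.2]
    · refine congrArg₂ _ (hf a b).symm (prod_congr rfl fun j hj => ?_)
      rw [update_of_ne (ne_of_mem_erase hj)]
  rw [← expOn_filter_add_filter_not p s i b, h_cond, h_cond, h_rest (!b), ← add_mul,
    bitProb_add_bitProb_not, one_mul]

def bitCount (b : Bool) (S : Finset (Fin n)) (a : Fin n → Bool) : ℕ :=
  #{i ∈ S | a i = b}

lemma bitCount_le_card (b : Bool) (S : Finset (Fin n)) (a : Fin n → Bool) :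
    bitCount b S a ≤ #S :=
  card_filter_le _ _

lemma bitCount_true_add_false (S : Finset (Fin n)) (a : Fin n → Bool) :
    bitCount true S a + bitCount false S a = #S := by
  simpa [bitCount] using card_filter_add_card_filter_not (s := S) (a · = true)

lemma bitCount_erase {i : Fin n} {S : Finset (Fin n)} (hi : i ∈ S) (b : Bool)
    (a : Fin n → Bool) :
    bitCount b S a = bitCount b (S.erase i) a + if a i = b then 1 else 0 := by
  unfold bitCount
  rw [filter_erase]
  split_ifs with h
  · rw [card_erase_add_one (mem_filter.2 ⟨hi, h⟩)]
  · rw [erase_eq_of_notMem (by simp [h]), add_zero]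

lemma bitCount_update {i : Fin n} {S : Finset (Fin n)} (hi : i ∉ S) (b v : Bool)
    (a : Fin n → Bool) : bitCount b S (update a i v) = bitCount b S a := by
  unfold bitCount
  congr 1
  refine filter_congr fun j hj => ?_
  rw [update_of_ne (ne_of_mem_of_not_mem hj hi)]

lemma bitCount_const (b : Bool) (S : Finset (Fin n)) :
    bitCount b S (fun _ => b) = #S := by
  simp [bitCount]

lemma bitCount_const_not (b : Bool) (S : Finset (Fin n)) :
    bitCount b S (fun _ => !b) = 0 := by
  simp [bitCount]

def atLeast (b : Bool) (S : Finset (Fin n)) (κ : ℕ) : Finset (Fin n → Bool) :=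
  {a | κ ≤ bitCount b S a}

lemma update_mem_atLeast {i : Fin n} {S : Finset (Fin n)} (hi : i ∉ S) (b : Bool) (κ : ℕ)
    (a : Fin n → Bool) (v : Bool) : update a i v ∈ atLeast b S κ ↔ a ∈ atLeast b S κ := by
  simp [atLeast, bitCount_update hi]

lemma atLeast_zero (b : Bool) (S : Finset (Fin n)) : atLeast b S 0 = univ := by
  simp [atLeast]

lemma atLeast_eq_empty {b : Bool} {S : Finset (Fin n)} {κ : ℕ} (h : #S < κ) :
    atLeast b S κ = ∅ := by
  simpa [atLeast] using fun a => h.trans_le' (bitCount_le_card b S a)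

lemma filter_atLeast_apply_eq {i : Fin n} {S : Finset (Fin n)} (hi : i ∈ S) (b : Bool)
    {κ : ℕ} (hκ : 1 ≤ κ) :
    (atLeast b S κ).filter (· i = b) = (atLeast b (S.erase i) (κ - 1)).filter (· i = b) := by
  ext a
  simp only [atLeast, mem_filter, mem_univ, true_and, and_congr_left_iff]
  intro hab
  rw [bitCount_erase hi b a, if_pos hab]
  omega

lemma filter_atLeast_apply_eq_not {i : Fin n} {S : Finset (Fin n)} (hi : i ∈ S) (b : Bool)
    (κ : ℕ) :
    (atLeast b S κ).filter (· i = !b) = (atLeast b (S.erase i) κ).filter (· i = !b) := by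
  ext a
  simp only [atLeast, mem_filter, mem_univ, true_and, and_congr_left_iff]
  intro hab
  rw [bitCount_erase hi b a, if_neg (by simp [hab]), add_zero]

lemma expOn_atLeast_split {p : Fin n → ℝ} {i : Fin n} {S : Finset (Fin n)} (hi : i ∈ S)
    (b : Bool) {κ : ℕ} (hκ : 1 ≤ κ) (g : Bool → (Fin n → Bool) → ℝ)
    (hg : ∀ v a w, g v (update a i w) = g v a) :
    expOn p (atLeast b S κ) (fun a => g (a i) a)
      = bitProb p b i * expOn p (atLeast b (S.erase i) (κ - 1)) (g b)
        + (1 - bitProb p b i) * expOn p (atLeast b (S.erase i) κ) (g !b) := by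
  have hiS : i ∉ S.erase i := notMem_erase i S
  have restrict : ∀ (v : Bool) (s : Finset (Fin n → Bool)),
      expOn p (s.filter (· i = v)) (fun a => g (a i) a) = expOn p (s.filter (· i = v)) (g v) :=
    fun v s => sum_congr rfl fun a ha => by simp only [(mem_filter.1 ha).2]
  rw [← expOn_filter_add_filter_not p _ i b, filter_atLeast_apply_eq hi b hκ,
    filter_atLeast_apply_eq_not hi b κ, restrict, restrict,
    expOn_filter_apply_eq (update_mem_atLeast hiS b _) (hg b),
    expOn_filter_apply_eq (update_mem_atLeast hiS b _) (hg !b), bitProb_not]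

lemma expOn_atLeast_one_split (p : Fin n → ℝ) {i : Fin n} {S : Finset (Fin n)} (hi : i ∈ S)
    (b : Bool) {κ : ℕ} (hκ : 1 ≤ κ) :
    expOn p (atLeast b S κ) 1
      = bitProb p b i * expOn p (atLeast b (S.erase i) (κ - 1)) 1
        + (1 - bitProb p b i) * expOn p (atLeast b (S.erase i) κ) 1 :=
  expOn_atLeast_split hi b hκ (fun _ => 1) fun _ _ _ => rfl

lemma expOn_atLeast_zero_one (p : Fin n → ℝ) (b : Bool) (S : Finset (Fin n)) :
    expOn p (atLeast b S 0) 1 = 1 := by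
  simp [expOn, atLeast_zero, sum_pr]

lemma expOn_atLeast_one_eq_zero (p : Fin n → ℝ) {b : Bool} {S : Finset (Fin n)} {κ : ℕ}
    (h : #S < κ) : expOn p (atLeast b S κ) 1 = 0 := by
  simp [expOn, atLeast_eq_empty h]

lemma eval_node_apply (i : Fin n) (t : Bool → DTree n) (a : Fin n → Bool) :
    (node i (t false) (t true)).eval a = (t (a i)).eval a := by
  cases h : a i <;> simp [eval, h]

lemma cost_node_apply (c : Fin n → ℝ) (i : Fin n) (t : Bool → DTree n) (a : Fin n → Bool) :
    (node i (t false) (t true)).cost c a = c i + (t (a i)).cost c a := by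
  cases h : a i <;> simp [cost, h]

lemma proper_node_compl_iff {j : Fin n} {t₀ t₁ : DTree n} {S : Finset (Fin n)} :
    (node j t₀ t₁).Proper Sᶜ ↔
      j ∈ S ∧ t₀.Proper (S.erase j)ᶜ ∧ t₁.Proper (S.erase j)ᶜ := by
  simp [Proper, compl_erase]

lemma eval_update {T : DTree n} {U : Finset (Fin n)} (hT : T.Proper U) {i : Fin n}
    (hi : i ∈ U) (a : Fin n → Bool) (v : Bool) :
    T.eval (update a i v) = T.eval a := by
  induction T generalizing U with
  | leaf => rfl
  | node j t₀ t₁ ih₀ ih₁ =>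
    obtain ⟨hj, h₀, h₁⟩ := hT
    simp only [eval, update_of_ne (ne_of_mem_of_not_mem hi hj).symm,
      ih₀ h₀ (mem_insert_of_mem hi), ih₁ h₁ (mem_insert_of_mem hi)]

lemma cost_update (c : Fin n → ℝ) {T : DTree n} {U : Finset (Fin n)} (hT : T.Proper U)
    {i : Fin n} (hi : i ∈ U) (a : Fin n → Bool) (v : Bool) :
    T.cost c (update a i v) = T.cost c a := by
  induction T generalizing U with
  | leaf => rfl
  | node j t₀ t₁ ih₀ ih₁ =>
    obtain ⟨hj, h₀, h₁⟩ := hT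
    simp only [cost, update_of_ne (ne_of_mem_of_not_mem hi hj).symm,
      ih₀ h₀ (mem_insert_of_mem hi), ih₁ h₁ (mem_insert_of_mem hi)]

lemma cost_nonneg {c : Fin n → ℝ} (hc : ∀ i, 0 ≤ c i) (T : DTree n) (a : Fin n → Bool) :
    0 ≤ T.cost c a := by
  induction T with
  | leaf => exact le_rfl
  | node j t₀ t₁ ih₀ ih₁ =>
    simp only [cost]
    split_ifs
    · exact add_nonneg (hc j) ih₁
    · exact add_nonneg (hc j) ih₀

lemma expOn_cost_node {p : Fin n → ℝ} (c : Fin n → ℝ) {i : Fin n} {S : Finset (Fin n)}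
    (hi : i ∈ S) (b : Bool) {κ : ℕ} (hκ : 1 ≤ κ) {t : Bool → DTree n}
    (ht : ∀ v, (t v).Proper (S.erase i)ᶜ) :
    expOn p (atLeast b S κ) ((node i (t false) (t true)).cost c)
      = c i * expOn p (atLeast b S κ) 1
        + bitProb p b i * expOn p (atLeast b (S.erase i) (κ - 1)) ((t b).cost c)
        + (1 - bitProb p b i) * expOn p (atLeast b (S.erase i) κ) ((t !b).cost c) := by
  have hiS : i ∈ (S.erase i)ᶜ := by simp
  have hsplit : (node i (t false) (t true)).cost c
      = (fun _ => c i) + fun a => (t (a i)).cost c a :=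
    funext (cost_node_apply c i t)
  rw [hsplit, expOn_add, expOn_const, add_assoc,
    expOn_atLeast_split hi b hκ (fun v => (t v).cost c) fun v => cost_update c (ht v) hiS]
section Greedy

variable (p c : Fin n → ℝ) (b : Bool)

/-- Ties are broken by the index so that minima are unique. -/
noncomputable def key (i : Fin n) : ℝ ×ₗ Fin n :=
  toLex (c i / bitProb p b i, i)

lemma key_injective : Function.Injective (key p c b) := fun i j h => by
  simpa [key] using congrArg (fun x => (ofLex x).2) h

noncomputable def greedyPick (S : Finset (Fin n)) (hS : S.Nonempty) : Fin n :=
  (S.exists_min_image (key p c b) hS).choose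

variable {p c b}

lemma greedyPick_mem {S : Finset (Fin n)} (hS : S.Nonempty) : greedyPick p c b S hS ∈ S :=
  (S.exists_min_image (key p c b) hS).choose_spec.1

lemma key_greedyPick_le {S : Finset (Fin n)} (hS : S.Nonempty) {j : Fin n} (hj : j ∈ S) :
    key p c b (greedyPick p c b S hS) ≤ key p c b j :=
  (S.exists_min_image (key p c b) hS).choose_spec.2 j hj

lemma greedyPick_erase {S : Finset (Fin n)} (hS : S.Nonempty) {i : Fin n}
    (hi : i ≠ greedyPick p c b S hS) (hS' : (S.erase i).Nonempty) :
    greedyPick p c b (S.erase i) hS' = greedyPick p c b S hS :=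
  key_injective p c b <| le_antisymm
    (key_greedyPick_le hS' (mem_erase.2 ⟨hi.symm, greedyPick_mem hS⟩))
    (key_greedyPick_le hS (mem_of_mem_erase (greedyPick_mem hS')))

lemma mul_bitProb_le_of_key_le (hp : ∀ i, 0 < p i ∧ p i < 1) {i j : Fin n}
    (h : key p c b i ≤ key p c b j) : c i * bitProb p b j ≤ c j * bitProb p b i := by
  have hratio : c i / bitProb p b i ≤ c j / bitProb p b j := by
    rcases Prod.Lex.le_iff.1 h with h | ⟨h, -⟩
    exacts [h.le, h.le]
  rwa [div_le_div_iff₀ (bitProb_pos hp b i) (bitProb_pos hp b j)] at hratio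

variable (p c b)

/-- `greedyCost p c b S κ` is the expected cost, over the event `atLeast b S κ`, of querying the
coordinates of `S` in the greedy order until `κ` of them have shown the value `b`. -/
noncomputable def greedyCost (S : Finset (Fin n)) (κ : ℕ) : ℝ :=
  if h : κ = 0 ∨ #S < κ then 0
  else
    have hS : S.Nonempty := card_pos.1 (by omega)
    let t := greedyPick p c b S hS
    c t * expOn p (atLeast b S κ) 1 + bitProb p b t * greedyCost (S.erase t) (κ - 1)
      + (1 - bitProb p b t) * greedyCost (S.erase t) κ
termination_by #S
decreasing_by all_goals exact card_erase_lt_of_mem (greedyPick_mem hS)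

/-- The same cost when `i` is queried first and the greedy order is followed afterwards. -/
noncomputable def queryFirstCost (S : Finset (Fin n)) (κ : ℕ) (i : Fin n) : ℝ :=
  if κ = 0 then 0
  else c i * expOn p (atLeast b S κ) 1 + bitProb p b i * greedyCost p c b (S.erase i) (κ - 1)
    + (1 - bitProb p b i) * greedyCost p c b (S.erase i) κ

/-- The same cost when `i` and then `j` are queried first. -/
noncomputable def twoQueryCost (S : Finset (Fin n)) (κ : ℕ) (i j : Fin n) : ℝ :=
  c i * expOn p (atLeast b S κ) 1 + bitProb p b i * queryFirstCost p c b (S.erase i) (κ - 1) j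
    + (1 - bitProb p b i) * queryFirstCost p c b (S.erase i) κ j

variable {p c b}

lemma greedyCost_of_eq_zero_or_lt {S : Finset (Fin n)} {κ : ℕ} (h : κ = 0 ∨ #S < κ) :
    greedyCost p c b S κ = 0 := by
  rw [greedyCost, dif_pos h]

@[simp]
lemma greedyCost_zero (S : Finset (Fin n)) : greedyCost p c b S 0 = 0 :=
  greedyCost_of_eq_zero_or_lt (Or.inl rfl)

@[simp]
lemma queryFirstCost_zero (S : Finset (Fin n)) (i : Fin n) : queryFirstCost p c b S 0 i = 0 :=
  if_pos rfl

lemma queryFirstCost_of_one_le {S : Finset (Fin n)} {κ : ℕ} (hκ : 1 ≤ κ) (i : Fin n) :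
    queryFirstCost p c b S κ i
      = c i * expOn p (atLeast b S κ) 1 + bitProb p b i * greedyCost p c b (S.erase i) (κ - 1)
        + (1 - bitProb p b i) * greedyCost p c b (S.erase i) κ := by
  rw [queryFirstCost, if_neg (by omega)]

lemma greedyCost_eq_queryFirstCost {S : Finset (Fin n)} (hS : S.Nonempty) (κ : ℕ) :
    greedyCost p c b S κ = queryFirstCost p c b S κ (greedyPick p c b S hS) := by
  rcases Nat.eq_zero_or_pos κ with rfl | hκ
  · simp
  rw [queryFirstCost_of_one_le hκ]
  by_cases hcard : #S < κ
  · have hcard' : #(S.erase (greedyPick p c b S hS)) < κ - 1 := by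
      rw [card_erase_of_mem (greedyPick_mem hS)]; have := hS.card_pos; omega
    rw [greedyCost_of_eq_zero_or_lt (Or.inr hcard), expOn_atLeast_one_eq_zero p hcard,
      greedyCost_of_eq_zero_or_lt (Or.inr hcard'),
      greedyCost_of_eq_zero_or_lt (Or.inr (hcard'.trans_le (Nat.sub_le κ 1)))]
    ring
  · rw [greedyCost, dif_neg (by omega)]

lemma queryFirstCost_eq_twoQueryCost {S : Finset (Fin n)} {κ : ℕ} (hκ : 1 ≤ κ) {i : Fin n}
    (hS : (S.erase i).Nonempty) :
    queryFirstCost p c b S κ i = twoQueryCost p c b S κ i (greedyPick p c b (S.erase i) hS) := by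
  rw [queryFirstCost_of_one_le hκ, twoQueryCost, ← greedyCost_eq_queryFirstCost,
    ← greedyCost_eq_queryFirstCost]

/-- When at least two more `b`'s are needed, both `i` and `j` are queried whatever the first
answer is, so their order does not matter. -/
lemma twoQueryCost_comm {S : Finset (Fin n)} {κ : ℕ} (hκ : 2 ≤ κ) {i j : Fin n} (hi : i ∈ S)
    (hj : j ∈ S) : twoQueryCost p c b S κ i j = twoQueryCost p c b S κ j i := by
  have hPi := expOn_atLeast_one_split p hi b (κ := κ) (by omega)
  have hPj := expOn_atLeast_one_split p hj b (κ := κ) (by omega)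
  simp only [twoQueryCost, queryFirstCost_of_one_le (show 1 ≤ κ - 1 by omega),
    queryFirstCost_of_one_le (show 1 ≤ κ by omega), erase_right_comm (s := S) (a := i)]
  linear_combination c i * hPj - c j * hPi

lemma twoQueryCost_one_le {S : Finset (Fin n)} {i j : Fin n} (hi : i ∈ S) (hj : j ∈ S)
    (h : c i * bitProb p b j ≤ c j * bitProb p b i) :
    twoQueryCost p c b S 1 i j ≤ twoQueryCost p c b S 1 j i := by
  have hPi := expOn_atLeast_one_split p hi b le_rfl
  have hPj := expOn_atLeast_one_split p hj b le_rfl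
  simp only [twoQueryCost, Nat.sub_self, queryFirstCost_zero, queryFirstCost_of_one_le le_rfl,
    greedyCost_zero, expOn_atLeast_zero_one, erase_right_comm (s := S) (a := i)] at hPi hPj ⊢
  linear_combination c i * hPj - c j * hPi + h

end Greedy

section Exchange

variable {p c : Fin n → ℝ} {b : Bool}

variable (p c b) in
noncomputable def greedyPrefix : Finset (Fin n) → ℕ → Finset (Fin n)
  | _, 0 => ∅
  | S, κ + 1 =>
    if hS : S.Nonempty then
      insert (greedyPick p c b S hS) (greedyPrefix (S.erase (greedyPick p c b S hS)) κ)
    else ∅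

lemma greedyPrefix_subset (S : Finset (Fin n)) (κ : ℕ) : greedyPrefix p c b S κ ⊆ S := by
  induction κ generalizing S with
  | zero => exact empty_subset S
  | succ κ ih =>
    rw [greedyPrefix]
    split_ifs with hS
    · exact insert_subset (greedyPick_mem hS) ((ih _).trans (erase_subset _ S))
    · exact empty_subset S

lemma card_greedyPrefix {S : Finset (Fin n)} {κ : ℕ} (h : κ ≤ #S) :
    #(greedyPrefix p c b S κ) = κ := by
  induction κ generalizing S with
  | zero => rfl
  | succ κ ih =>
    have hS : S.Nonempty := card_pos.1 (by omega)
    have ht : greedyPick p c b S hS ∈ S := greedyPick_mem hS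
    rw [greedyPrefix, dif_pos hS,
      card_insert_of_notMem fun h' => notMem_erase _ S (greedyPrefix_subset _ _ h'),
      ih (by rw [card_erase_of_mem ht]; omega)]

lemma greedyPrefix_subset_succ (S : Finset (Fin n)) (κ : ℕ) :
    greedyPrefix p c b S κ ⊆ greedyPrefix p c b S (κ + 1) := by
  induction κ generalizing S with
  | zero => exact empty_subset _
  | succ κ ih =>
    rw [greedyPrefix.eq_2 p c b S κ, greedyPrefix.eq_2 p c b S (κ + 1)]
    split_ifs
    · exact insert_subset_insert _ (ih _)
    · exact subset_rfl

lemma mem_greedyPrefix_erase {S : Finset (Fin n)} {κ : ℕ} {i : Fin n}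
    (h : i ∈ greedyPrefix p c b S κ) (hS : S.Nonempty) (hi : i ≠ greedyPick p c b S hS) :
    2 ≤ κ ∧ i ∈ greedyPrefix p c b (S.erase (greedyPick p c b S hS)) (κ - 1) := by
  rcases κ with _ | κ
  · simp [greedyPrefix] at h
  rw [greedyPrefix, dif_pos hS, mem_insert] at h
  replace h := h.resolve_left hi
  rcases κ with _ | κ
  · simp [greedyPrefix] at h
  · exact ⟨by omega, h⟩

/-- Exchange argument: with `t` the greedy pick, compare the orders `t, i` and `i, t` of the
first two queries. -/
lemma greedyCost_le_queryFirstCost (hp : ∀ i, 0 < p i ∧ p i < 1) {S : Finset (Fin n)}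
    {i : Fin n} (hi : i ∈ S) (κ : ℕ) :
    greedyCost p c b S κ ≤ queryFirstCost p c b S κ i := by
  have hS : S.Nonempty := ⟨i, hi⟩
  set t := greedyPick p c b S hS with ht
  by_cases hit : i = t
  · rw [greedyCost_eq_queryFirstCost hS, ← ht, hit]
  rcases Nat.eq_zero_or_pos κ with rfl | hκ
  · simp
  have htS : t ∈ S := greedyPick_mem hS
  have hiS' : i ∈ S.erase t := mem_erase.2 ⟨hit, hi⟩
  have hq : 0 ≤ bitProb p b t := (bitProb_pos hp b t).le
  have hq' : 0 ≤ 1 - bitProb p b t := by linarith [bitProb_lt_one hp b t]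
  calc greedyCost p c b S κ = queryFirstCost p c b S κ t := greedyCost_eq_queryFirstCost hS κ
    _ ≤ twoQueryCost p c b S κ t i := by
      rw [queryFirstCost_of_one_le hκ, twoQueryCost]
      gcongr
      · exact greedyCost_le_queryFirstCost hp hiS' _
      · exact greedyCost_le_queryFirstCost hp hiS' _
    _ ≤ twoQueryCost p c b S κ i t := by
      rcases (show κ = 1 ∨ 2 ≤ κ by omega) with rfl | hκ2
      · exact twoQueryCost_one_le htS hi (mul_bitProb_le_of_key_le hp (key_greedyPick_le hS hi))
      · exact (twoQueryCost_comm hκ2 htS hi).le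
    _ = queryFirstCost p c b S κ i := by
      have hS' : (S.erase i).Nonempty := ⟨t, mem_erase.2 ⟨Ne.symm hit, htS⟩⟩
      rw [queryFirstCost_eq_twoQueryCost hκ hS', greedyPick_erase hS hit hS']
termination_by #S
decreasing_by all_goals exact card_erase_lt_of_mem htS

lemma greedyCost_eq_queryFirstCost_of_mem {S : Finset (Fin n)} {κ : ℕ} {i : Fin n}
    (hi : i ∈ greedyPrefix p c b S κ) :
    greedyCost p c b S κ = queryFirstCost p c b S κ i := by
  have hiS : i ∈ S := greedyPrefix_subset S κ hi
  have hS : S.Nonempty := ⟨i, hiS⟩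
  set t := greedyPick p c b S hS with ht
  by_cases hit : i = t
  · rw [greedyCost_eq_queryFirstCost hS, ← ht, hit]
  obtain ⟨hκ, hi₁⟩ := mem_greedyPrefix_erase hi hS hit
  have hi₂ : i ∈ greedyPrefix p c b (S.erase t) κ := by
    simpa [Nat.sub_add_cancel (by omega : 1 ≤ κ)] using greedyPrefix_subset_succ _ _ hi₁
  have htS : t ∈ S := greedyPick_mem hS
  calc greedyCost p c b S κ = queryFirstCost p c b S κ t := greedyCost_eq_queryFirstCost hS κ
    _ = twoQueryCost p c b S κ t i := by
      rw [queryFirstCost_of_one_le (by omega), twoQueryCost,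
        greedyCost_eq_queryFirstCost_of_mem hi₁, greedyCost_eq_queryFirstCost_of_mem hi₂]
    _ = twoQueryCost p c b S κ i t := twoQueryCost_comm hκ htS hiS
    _ = queryFirstCost p c b S κ i := by
      have hS' : (S.erase i).Nonempty := ⟨t, mem_erase.2 ⟨Ne.symm hit, htS⟩⟩
      rw [queryFirstCost_eq_twoQueryCost (by omega) hS', greedyPick_erase hS hit hS']
termination_by #S
decreasing_by all_goals exact card_erase_lt_of_mem htS

end Exchange

section LowerBound

variable {p c : Fin n → ℝ} {b : Bool}

lemma eval_child_of_threshold {j : Fin n} {S : Finset (Fin n)} (hj : j ∈ S)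
    {t : Bool → DTree n} (ht : ∀ v, (t v).Proper (S.erase j)ᶜ) {κ x y : ℕ}
    (heval : ∀ a, (node j (t false) (t true)).eval a = if κ ≤ bitCount b S a then x else y)
    (v : Bool) (a : Fin n → Bool) :
    (t v).eval a = if κ ≤ bitCount b (S.erase j) a + (if v = b then 1 else 0) then x else y := by
  have h := heval (update a j v)
  rwa [eval_node_apply, update_self, eval_update (ht v) (by simp), bitCount_erase hj,
    update_self, bitCount_update (notMem_erase j S)] at h

lemma greedyCost_le_expOn_cost (hp : ∀ i, 0 < p i ∧ p i < 1) (hc : ∀ i, 0 ≤ c i) {x y : ℕ}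
    (hxy : x ≠ y) (T : DTree n) {S : Finset (Fin n)} {κ : ℕ} (hT : T.Proper Sᶜ)
    (heval : ∀ a, T.eval a = if κ ≤ bitCount b S a then x else y) :
    greedyCost p c b S κ ≤ expOn p (atLeast b S κ) (T.cost c) := by
  induction T generalizing S κ with
  | leaf w =>
    suffices h : κ = 0 ∨ #S < κ by
      rw [greedyCost_of_eq_zero_or_lt h]
      exact expOn_nonneg hp fun a => cost_nonneg hc _ a
    by_contra! h
    have h₁ := heval fun _ => b
    have h₀ := heval fun _ => !b
    simp only [eval, bitCount_const, bitCount_const_not, if_pos h.2,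
      if_neg (Nat.pos_of_ne_zero h.1).not_ge] at h₁ h₀
    exact hxy (h₁.symm.trans h₀)
  | node j t₀ t₁ ih₀ ih₁ =>
    rcases Nat.eq_zero_or_pos κ with rfl | hκ
    · rw [greedyCost_zero]
      exact expOn_nonneg hp fun a => cost_nonneg hc _ a
    obtain ⟨hj, h₀, h₁⟩ := proper_node_compl_iff.1 hT
    set t : Bool → DTree n := fun v => cond v t₁ t₀
    have ht : ∀ v, (t v).Proper (S.erase j)ᶜ := fun v => by cases v; exacts [h₀, h₁]
    have ih : ∀ v {S' : Finset (Fin n)} {κ' : ℕ}, (t v).Proper S'ᶜ →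
        (∀ a, (t v).eval a = if κ' ≤ bitCount b S' a then x else y) →
        greedyCost p c b S' κ' ≤ expOn p (atLeast b S' κ') ((t v).cost c) := fun v => by
      cases v
      exacts [ih₀, ih₁]
    have hq : 0 ≤ bitProb p b j := (bitProb_pos hp b j).le
    have hq' : 0 ≤ 1 - bitProb p b j := by linarith [bitProb_lt_one hp b j]
    calc greedyCost p c b S κ ≤ queryFirstCost p c b S κ j :=
          greedyCost_le_queryFirstCost hp hj κ
      _ = c j * expOn p (atLeast b S κ) 1
          + bitProb p b j * greedyCost p c b (S.erase j) (κ - 1)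
          + (1 - bitProb p b j) * greedyCost p c b (S.erase j) κ :=
          queryFirstCost_of_one_le hκ j
      _ ≤ c j * expOn p (atLeast b S κ) 1
          + bitProb p b j * expOn p (atLeast b (S.erase j) (κ - 1)) ((t b).cost c)
          + (1 - bitProb p b j) * expOn p (atLeast b (S.erase j) κ) ((t !b).cost c) := by
        gcongr
        · refine ih b (ht b) fun a => ?_
          simp [eval_child_of_threshold hj ht heval]
        · refine ih (!b) (ht !b) fun a => ?_
          simp [eval_child_of_threshold hj ht heval]
      _ = expOn p (atLeast b S κ) ((node j t₀ t₁).cost c) :=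
          (expOn_cost_node c hj b hκ ht).symm

end LowerBound

section PivotTree

variable (p c : Fin n → ℝ)

/-- The `κ`-of-`S` threshold function takes the value `1` iff at least `quota true S κ`
coordinates of `S` are true, and the value `0` iff at least `quota false S κ` are false. -/
def quota (b : Bool) (S : Finset (Fin n)) (κ : ℕ) : ℕ :=
  cond b κ (#S + 1 - κ)

noncomputable def pivots (S : Finset (Fin n)) (κ : ℕ) : Finset (Fin n) :=
  {i | ∀ b, i ∈ greedyPrefix p c b S (quota b S κ)}

variable {p c}

lemma threshold_eq_ite (b : Bool) (S : Finset (Fin n)) (κ : ℕ) (a : Fin n → Bool) :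
    (if κ ≤ bitCount true S a then 1 else 0)
      = if quota b S κ ≤ bitCount b S a then b.toNat else (!b).toNat := by
  have := bitCount_true_add_false S a
  cases b <;> simp only [quota] <;> split_ifs <;> simp <;> omega

lemma quota_erase_cond {i : Fin n} {S : Finset (Fin n)} (hi : i ∈ S) (b : Bool) (κ : ℕ) :
    quota b (S.erase i) (cond b (κ - 1) κ) = quota b S κ - 1 := by
  have := card_pos.2 ⟨i, hi⟩
  cases b
  · simp only [quota, cond_false, card_erase_of_mem hi]; omega
  · rfl

lemma quota_erase_cond_not {i : Fin n} {S : Finset (Fin n)} (hi : i ∈ S) (b : Bool) {κ : ℕ}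
    (hκ : 1 ≤ κ) : quota b (S.erase i) (cond b κ (κ - 1)) = quota b S κ := by
  have := card_pos.2 ⟨i, hi⟩
  cases b
  · simp only [quota, cond_false, card_erase_of_mem hi]; omega
  · rfl

lemma one_le_of_mem_greedyPrefix {b : Bool} {S : Finset (Fin n)} {κ : ℕ} {i : Fin n}
    (h : i ∈ greedyPrefix p c b S κ) : 1 ≤ κ := by
  rcases κ with _ | κ
  · simp [greedyPrefix] at h
  · omega

lemma pivots_nonempty {S : Finset (Fin n)} {κ : ℕ} (h₁ : 1 ≤ κ) (h₂ : κ ≤ #S) :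
    (pivots p c S κ).Nonempty := by
  obtain ⟨i, hi⟩ := inter_nonempty_of_card_lt_card_add_card
    (greedyPrefix_subset (p := p) (c := c) (b := true) S κ)
    (greedyPrefix_subset (p := p) (c := c) (b := false) S (#S + 1 - κ))
    (by rw [card_greedyPrefix h₂, card_greedyPrefix (by omega)]; omega)
  refine ⟨i, mem_filter.2 ⟨mem_univ i, fun b => ?_⟩⟩
  cases b
  exacts [(mem_inter.1 hi).2, (mem_inter.1 hi).1]

lemma mem_and_one_le_of_mem_pivots {S : Finset (Fin n)} {κ : ℕ} {i : Fin n}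
    (h : i ∈ pivots p c S κ) : i ∈ S ∧ 1 ≤ κ :=
  have h := (mem_filter.1 h).2 true
  ⟨greedyPrefix_subset S _ h, one_le_of_mem_greedyPrefix h⟩

variable (p c)

noncomputable def pivotTree (S : Finset (Fin n)) (κ : ℕ) : DTree n :=
  if h : (pivots p c S κ).Nonempty then
    node h.choose (pivotTree (S.erase h.choose) κ) (pivotTree (S.erase h.choose) (κ - 1))
  else leaf (if κ = 0 then 1 else 0)
termination_by #S
decreasing_by all_goals exact card_erase_lt_of_mem (mem_and_one_le_of_mem_pivots h.choose_spec).1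

variable {p c}

lemma pivotTree_eq_node {S : Finset (Fin n)} {κ : ℕ} (h : (pivots p c S κ).Nonempty) :
    ∃ i ∈ pivots p c S κ, pivotTree p c S κ
      = node i (pivotTree p c (S.erase i) κ) (pivotTree p c (S.erase i) (κ - 1)) :=
  ⟨h.choose, h.choose_spec, by rw [pivotTree, dif_pos h]⟩

lemma pivotTree_eq_leaf {S : Finset (Fin n)} {κ : ℕ} (h : ¬(pivots p c S κ).Nonempty) :
    pivotTree p c S κ = leaf (if κ = 0 then 1 else 0) := by
  rw [pivotTree, dif_neg h]

lemma eq_zero_or_lt_of_not_pivots_nonempty {S : Finset (Fin n)} {κ : ℕ}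
    (h : ¬(pivots p c S κ).Nonempty) : κ = 0 ∨ #S < κ := by
  by_contra! h'
  exact h (pivots_nonempty (Nat.one_le_iff_ne_zero.2 h'.1) h'.2)

variable (p c)

lemma pivotTree_proper (S : Finset (Fin n)) (κ : ℕ) : (pivotTree p c S κ).Proper Sᶜ := by
  by_cases h : (pivots p c S κ).Nonempty
  · obtain ⟨i, hi, heq⟩ := pivotTree_eq_node h
    rw [heq]
    exact proper_node_compl_iff.2 ⟨(mem_and_one_le_of_mem_pivots hi).1,
      pivotTree_proper (S.erase i) κ, pivotTree_proper (S.erase i) (κ - 1)⟩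
  · rw [pivotTree_eq_leaf h]
    trivial
termination_by #S
decreasing_by all_goals exact card_erase_lt_of_mem (mem_and_one_le_of_mem_pivots hi).1

lemma eval_pivotTree (S : Finset (Fin n)) (κ : ℕ) (a : Fin n → Bool) :
    (pivotTree p c S κ).eval a = if κ ≤ bitCount true S a then 1 else 0 := by
  by_cases h : (pivots p c S κ).Nonempty
  · obtain ⟨i, hi, heq⟩ := pivotTree_eq_node h
    obtain ⟨hiS, hκ⟩ := mem_and_one_le_of_mem_pivots hi
    have hcount := bitCount_erase hiS true a
    rw [heq]
    cases hai : a i <;>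
      simp only [eval, hai, eval_pivotTree (S.erase i) κ a, eval_pivotTree (S.erase i) (κ - 1) a,
        Bool.false_eq_true, if_true, if_false] at hcount ⊢ <;>
      split_ifs <;> omega
  · have := bitCount_le_card true S a
    rw [pivotTree_eq_leaf h]
    rcases eq_zero_or_lt_of_not_pivots_nonempty h with rfl | hlt
    · simp [eval]
    · simp [eval, show κ ≠ 0 by omega, show ¬κ ≤ bitCount true S a by omega]
termination_by #S
decreasing_by all_goals exact card_erase_lt_of_mem (mem_and_one_le_of_mem_pivots hi).1

/-- The pivot tree is simultaneously optimal for both certificate values. -/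
lemma expOn_cost_pivotTree (b : Bool) (S : Finset (Fin n)) (κ : ℕ) :
    expOn p (atLeast b S (quota b S κ)) ((pivotTree p c S κ).cost c)
      = greedyCost p c b S (quota b S κ) := by
  by_cases h : (pivots p c S κ).Nonempty
  · obtain ⟨i, hi, heq⟩ := pivotTree_eq_node h
    obtain ⟨hiS, hκ⟩ := mem_and_one_le_of_mem_pivots hi
    have hpref : i ∈ greedyPrefix p c b S (quota b S κ) := (mem_filter.1 hi).2 b
    have hq := one_le_of_mem_greedyPrefix hpref
    set t : Bool → DTree n := fun v => pivotTree p c (S.erase i) (cond v (κ - 1) κ)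
    have ht : ∀ v, (t v).Proper (S.erase i)ᶜ := fun v => pivotTree_proper p c _ _
    have hb := expOn_cost_pivotTree b (S.erase i) (cond b (κ - 1) κ)
    have hnb := expOn_cost_pivotTree b (S.erase i) (cond b κ (κ - 1))
    rw [quota_erase_cond hiS b κ] at hb
    rw [quota_erase_cond_not hiS b hκ] at hnb
    calc expOn p (atLeast b S (quota b S κ)) ((pivotTree p c S κ).cost c)
        = expOn p (atLeast b S (quota b S κ)) ((node i (t false) (t true)).cost c) := by
          rw [heq]; rfl
      _ = queryFirstCost p c b S (quota b S κ) i := by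
          rw [expOn_cost_node c hiS b hq ht, queryFirstCost_of_one_le hq]
          simp only [t, Bool.cond_not, hb, hnb]
      _ = greedyCost p c b S (quota b S κ) := (greedyCost_eq_queryFirstCost_of_mem hpref).symm
  · have hq : quota b S κ = 0 ∨ #S < quota b S κ := by
      have := eq_zero_or_lt_of_not_pivots_nonempty h
      cases b <;> simp only [quota, cond_true, cond_false] <;> omega
    rw [greedyCost_of_eq_zero_or_lt hq, pivotTree_eq_leaf h]
    simp [expOn, cost]
termination_by #S
decreasing_by all_goals exact card_erase_lt_of_mem (mem_and_one_le_of_mem_pivots hi).1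

end PivotTree

lemma filter_threshold_eq_atLeast (b : Bool) (S : Finset (Fin n)) (κ : ℕ) :
    ({a | (if κ ≤ bitCount true S a then 1 else 0) = b.toNat} : Finset (Fin n → Bool))
      = atLeast b S (quota b S κ) := by
  ext a
  simp only [mem_filter, mem_univ, true_and, atLeast, threshold_eq_ite b S κ a]
  split_ifs with h <;> cases b <;> simp [h]

lemma OPTcost_eq_minLCost_add_minLCost {p c : Fin n → ℝ} {h : (Fin n → Bool) → ℕ}
    (hh : ∀ a, h a ≤ 1) {T₀ : DTree n} (hT₀ : T₀.Proper ∅) (hT₀h : ∀ a, T₀.eval a = h a)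
    (hopt : ∀ (b : Bool) (T : DTree n), T.Proper ∅ → (∀ a, T.eval a = h a) →
      expOn p {a | h a = b.toNat} (T₀.cost c) ≤ expOn p {a | h a = b.toNat} (T.cost c)) :
    OPTcost p c h = minLCost p c h 0 + minLCost p c h 1 := by
  have hsplit : ∀ T : DTree n, ∑ a, T.cost c a * pr p a
      = expOn p {a | h a = false.toNat} (T.cost c) + expOn p {a | h a = true.toNat} (T.cost c) := by
    intro T
    rw [← sum_filter_add_sum_filter_not univ (h · = 0)]
    congr 2
    exact filter_congr fun a _ => by have := hh a; simp; omega
  have hmin : ∀ b : Bool, minLCost p c h b.toNat = expOn p {a | h a = b.toNat} (T₀.cost c) :=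
    fun b => IsLeast.csInf_eq ⟨⟨T₀, hT₀, hT₀h, rfl⟩,
      by rintro _ ⟨T, hT, hTh, rfl⟩; exact hopt b T hT hTh⟩
  have hOPT : OPTcost p c h = expOn p {a | h a = false.toNat} (T₀.cost c)
      + expOn p {a | h a = true.toNat} (T₀.cost c) := by
    refine IsLeast.csInf_eq ⟨⟨T₀, hT₀, hT₀h, (hsplit T₀).symm⟩, ?_⟩
    rintro _ ⟨T, hT, hTh, rfl⟩
    rw [hsplit]
    exact add_le_add (hopt false T hT hTh) (hopt true T hT hTh)
  rw [hOPT, ← hmin false, ← hmin true]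
  rfl

end KOfN

open KOfN in
theorem stmt19_general {n : ℕ} (p c : Fin n → ℝ)
    (hp : ∀ i, 0 < p i ∧ p i < 1) (hc : ∀ i, 0 < c i)
    (k : ℕ) :
    OPTcost p c (fun a => if k ≤ N1 a then 1 else 0) =
      minLCost p c (fun a => if k ≤ N1 a then 1 else 0) 0 +
        minLCost p c (fun a => if k ≤ N1 a then 1 else 0) 1 := by
  have hT₀ : (pivotTree p c univ k).Proper ∅ := by simpa using pivotTree_proper p c univ k
  refine OPTcost_eq_minLCost_add_minLCost (fun a => by split_ifs <;> simp) hT₀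
    (eval_pivotTree p c univ k) fun b T hT hTh => ?_
  have hevent : ({a | (if k ≤ N1 a then 1 else 0) = b.toNat} : Finset (Fin n → Bool))
      = atLeast b univ (quota b univ k) :=
    filter_threshold_eq_atLeast b univ k
  rw [hevent, expOn_cost_pivotTree]
  exact greedyCost_le_expOn_cost hp (fun i => (hc i).le) (x := b.toNat) (y := (!b).toNat)
    (by cases b <;> decide) T (S := univ) (by simpa using hT)
    fun a => (hTh a).trans (threshold_eq_ite b univ k a)

theorem stmt19 {n : ℕ} (hn : 1 ≤ n) (p c : Fin n → ℝ)
    (hp : ∀ i, 0 < p i ∧ p i < 1) (hc : ∀ i, 0 < c i)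
    (k : ℕ) (hk1 : 1 ≤ k) (hkn : k ≤ n) :
    OPTcost p c (fun a => if k ≤ N1 a then 1 else 0) =
      minLCost p c (fun a => if k ≤ N1 a then 1 else 0) 0 +
        minLCost p c (fun a => if k ≤ N1 a then 1 else 0) 1 :=
  stmt19_general p c hp hc k
end
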